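/- arXiv:1611.06509 — 6 statements merged into one kernel-verified Lean document; each statement's English description precedes it below -/
import Mathlib

section
/- Let L be the generator of an irreducible continuous-time Markov chain on a finite state space with invariant probability measure π, and let L_S be its symmetric part with respect to L²(π). Let α_min and α_max be the smallest and largest nonzero eigenvalues of −L_S (which are real and positive). Then every nonzero eigenvalue λ of −L satisfies α_min ≤ Re(λ) ≤ α_max. -/
/-!
Let `−L v = λ v` with `λ ≠ 0` and write `v = f + i g`. Invariance of `π` gives
`λ ⟨1, v⟩_π = ⟨1, −L v⟩_π = 0`, so `f` and `g` are centred, and the real part of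
`⟨v, −L v⟩_π = λ ‖v‖²` reads `Re λ ‖v‖² = ⟨f, −L f⟩_π + ⟨g, −L g⟩_π`. A quadratic form only sees
the symmetric part of an operator, so `−L` may be replaced by `−L_S` here. By irreducibility the
kernel of `L_S` is the constants, so the spectral theorem for the self-adjoint `−L_S` gives
`α_min ‖u‖² ≤ ⟨u, −L_S u⟩_π ≤ α_max ‖u‖²` for every centred `u`.
-/

open Finset
open scoped RealInnerProductSpace

namespace LinearMap.IsSymmetric

variable {E : Type*} [NormedAddCommGroup E] [InnerProductSpace ℝ E] [FiniteDimensional ℝ E]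
  {T : E →ₗ[ℝ] E}

theorem inner_map_self_eq_sum_eigenvalues (hT : T.IsSymmetric) (w : E) :
    ⟪w, T w⟫ = ∑ i, hT.eigenvalues rfl i * ⟪hT.eigenvectorBasis rfl i, w⟫ ^ 2 := by
  rw [← (hT.eigenvectorBasis rfl).sum_inner_mul_inner]
  refine sum_congr rfl fun i _ => ?_
  rw [← hT, hT.apply_eigenvectorBasis, RCLike.ofReal_real_eq_id, id_eq, real_inner_smul_left,
    real_inner_comm w]
  ring

theorem inner_map_self_mem_Icc {a b : ℝ} (hT : T.IsSymmetric)
    (hab : ∀ μ, μ ≠ 0 → Module.End.HasEigenvalue T μ → μ ∈ Set.Icc a b)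
    {w : E} (hw : w ∈ (LinearMap.ker T)ᗮ) :
    ⟪w, T w⟫ ∈ Set.Icc (a * ‖w‖ ^ 2) (b * ‖w‖ ^ 2) := by
  have hterm : ∀ i, hT.eigenvalues rfl i * ⟪hT.eigenvectorBasis rfl i, w⟫ ^ 2 ∈
      Set.Icc (a * ⟪hT.eigenvectorBasis rfl i, w⟫ ^ 2) (b * ⟪hT.eigenvectorBasis rfl i, w⟫ ^ 2) := by
    intro i
    by_cases hμ : hT.eigenvalues rfl i = 0
    · have hker : hT.eigenvectorBasis rfl i ∈ LinearMap.ker T := by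
        rw [LinearMap.mem_ker, hT.apply_eigenvectorBasis, hμ, RCLike.ofReal_zero, zero_smul]
      simp [Submodule.inner_right_of_mem_orthogonal hker hw]
    · obtain ⟨ha, hb⟩ := hab _ hμ (hT.hasEigenvalue_eigenvalues rfl i)
      exact ⟨by gcongr, by gcongr⟩
  rw [hT.inner_map_self_eq_sum_eigenvalues, ← (hT.eigenvectorBasis rfl).sum_sq_inner_right,
    mul_sum, mul_sum]
  exact ⟨sum_le_sum fun i _ => (hterm i).1, sum_le_sum fun i _ => (hterm i).2⟩

end LinearMap.IsSymmetric

namespace JumpRates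

variable {Ω : Type*} {π : Ω → ℝ} {r c : Ω → Ω → ℝ}

def IsReversible (π : Ω → ℝ) (r : Ω → Ω → ℝ) : Prop :=
  ∀ x y, π x * r x y = π y * r y x

def IsIrreducible (r : Ω → Ω → ℝ) : Prop :=
  ∀ x y : Ω, x ≠ y → ∃ (k : ℕ) (p : Fin (k + 1) → Ω),
    p 0 = x ∧ p (Fin.last k) = y ∧ ∀ i : Fin k, 0 < r (p i.castSucc) (p i.succ)

theorem IsIrreducible.eq_of_forall_pos {u : Ω → ℝ} (hirr : IsIrreducible r)
    (hu : ∀ x y, 0 < r x y → u x = u y) (x y : Ω) : u x = u y := by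
  rcases eq_or_ne x y with rfl | hxy
  · rfl
  obtain ⟨k, p, rfl, rfl, hp⟩ := hirr x y hxy
  have hpath : ∀ i : Fin (k + 1), u (p 0) = u (p i) := by
    intro i
    induction i using Fin.induction with
    | zero => rfl
    | succ i ih => exact ih.trans (hu _ _ (hp i))
  exact hpath (Fin.last k)

/-- The rates of `L_S = (L + L*) / 2`, where `L*` is the adjoint of `L` in `L²(π)`. -/
noncomputable def symmetrization (π : Ω → ℝ) (c : Ω → Ω → ℝ) (x y : Ω) : ℝ :=
  (c x y + π y * c y x / π x) / 2

theorem isReversible_symmetrization (hπ : ∀ x, 0 < π x) :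
    IsReversible π (symmetrization π c) := by
  intro x y
  simp only [symmetrization]
  field_simp [(hπ x).ne', (hπ y).ne']
  ring

noncomputable def toL2 (π : Ω → ℝ) : (Ω → ℝ) →ₗ[ℝ] EuclideanSpace ℝ Ω :=
  (WithLp.linearEquiv 2 ℝ (Ω → ℝ)).symm.toLinearMap ∘ₗ LinearMap.mulLeft ℝ fun x => √(π x)

noncomputable def ofL2 (π : Ω → ℝ) : EuclideanSpace ℝ Ω →ₗ[ℝ] Ω → ℝ :=
  LinearMap.mulLeft ℝ (fun x => (√(π x))⁻¹) ∘ₗ (WithLp.linearEquiv 2 ℝ (Ω → ℝ)).toLinearMap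

@[simp]
theorem toL2_apply (f : Ω → ℝ) (x : Ω) : toL2 π f x = √(π x) * f x := rfl

@[simp]
theorem ofL2_apply (w : EuclideanSpace ℝ Ω) (x : Ω) : ofL2 π w x = (√(π x))⁻¹ * w x := rfl

theorem ofL2_toL2 (hπ : ∀ x, 0 < π x) (f : Ω → ℝ) : ofL2 π (toL2 π f) = f := by
  ext x
  simp [(Real.sqrt_pos.2 (hπ x)).ne']

theorem toL2_ofL2 (hπ : ∀ x, 0 < π x) (w : EuclideanSpace ℝ Ω) : toL2 π (ofL2 π w) = w := by
  ext x
  simp [(Real.sqrt_pos.2 (hπ x)).ne']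

theorem toL2_injective (hπ : ∀ x, 0 < π x) : Function.Injective (toL2 π) :=
  Function.LeftInverse.injective (ofL2_toL2 hπ)

variable [Fintype Ω]

def generator (r : Ω → Ω → ℝ) : (Ω → ℝ) →ₗ[ℝ] Ω → ℝ where
  toFun f x := ∑ y, r x y * (f y - f x)
  map_add' f g := by
    ext x
    simp only [Pi.add_apply, ← sum_add_distrib]
    exact sum_congr rfl fun y _ => by ring
  map_smul' a f := by
    ext x
    simp only [Pi.smul_apply, smul_eq_mul, RingHom.id_apply, mul_sum]
    exact sum_congr rfl fun y _ => by ring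

theorem generator_apply (r : Ω → Ω → ℝ) (f : Ω → ℝ) (x : Ω) :
    generator r f x = ∑ y, r x y * (f y - f x) := rfl

theorem generator_eq_sub (r : Ω → Ω → ℝ) (f : Ω → ℝ) (x : Ω) :
    generator r f x = ∑ y, r x y * f y - (∑ y, r x y) * f x := by
  rw [generator_apply, sum_mul, ← sum_sub_distrib]
  exact sum_congr rfl fun y _ => by ring

def IsInvariant (π : Ω → ℝ) (r : Ω → Ω → ℝ) : Prop :=
  ∀ f, ∑ x, π x * generator r f x = 0

def dirichletForm (π : Ω → ℝ) (r : Ω → Ω → ℝ) (f g : Ω → ℝ) : ℝ :=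
  ∑ x, π x * f x * -generator r g x

theorem IsReversible.isInvariant (hrev : IsReversible π r) : IsInvariant π r := by
  intro f
  have hswap : ∑ x, ∑ y, π x * r x y * f y = ∑ x, ∑ y, π x * r x y * f x := by
    rw [sum_comm]
    exact sum_congr rfl fun x _ => sum_congr rfl fun y _ => by rw [hrev]
  simp only [generator_apply, mul_sum, mul_sub, sum_sub_distrib, ← mul_assoc, hswap, sub_self]

theorem IsInvariant.balance (hinv : IsInvariant π r) (y : Ω) :
    ∑ x, π x * r x y = π y * ∑ x, r y x := by
  classical
  have := hinv (Pi.single y 1)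
  simp only [generator_eq_sub, Pi.single_apply, mul_ite, mul_one, mul_zero, sum_ite_eq',
    mem_univ, if_true, mul_sub, sum_sub_distrib] at this
  exact sub_eq_zero.mp this

theorem dirichletForm_eq_sum_sum (π : Ω → ℝ) (r : Ω → Ω → ℝ) (f g : Ω → ℝ) :
    dirichletForm π r f g = ∑ x, ∑ y, π x * r x y * f x * (g x - g y) := by
  refine sum_congr rfl fun x _ => ?_
  rw [generator_apply, ← sum_neg_distrib, mul_sum]
  exact sum_congr rfl fun y _ => by ring

theorem IsReversible.dirichletForm_comm (hrev : IsReversible π r) (f g : Ω → ℝ) :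
    dirichletForm π r f g = dirichletForm π r g f := by
  have hswap : ∑ x, ∑ y, π x * r x y * f x * g y = ∑ x, ∑ y, π x * r x y * g x * f y := by
    rw [sum_comm]
    exact sum_congr rfl fun x _ => sum_congr rfl fun y _ => by rw [hrev]; ring
  simp only [dirichletForm_eq_sum_sum, mul_sub, sum_sub_distrib, hswap]
  simp only [mul_assoc, mul_comm (f _) (g _)]

theorem IsInvariant.two_mul_dirichletForm_self (hinv : IsInvariant π r) (u : Ω → ℝ) :
    2 * dirichletForm π r u u = ∑ x, ∑ y, π x * r x y * (u y - u x) ^ 2 := by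
  have hswap : ∑ x, ∑ y, π x * r x y * u y ^ 2 = ∑ x, ∑ y, π x * r x y * u x ^ 2 := by
    rw [sum_comm]
    refine sum_congr rfl fun y _ => ?_
    rw [← sum_mul, hinv.balance, mul_sum, sum_mul]
  have hsplit : ∑ x, ∑ y, π x * r x y * (u y - u x) ^ 2 =
      2 * dirichletForm π r u u + (∑ x, ∑ y, π x * r x y * u y ^ 2
        - ∑ x, ∑ y, π x * r x y * u x ^ 2) := by
    simp only [dirichletForm_eq_sum_sum, mul_sum, ← sum_sub_distrib, ← sum_add_distrib]
    exact sum_congr rfl fun x _ => sum_congr rfl fun y _ => by ring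
  rw [hsplit, hswap, sub_self, add_zero]

theorem IsInvariant.eq_of_dirichletForm_self_eq_zero (hinv : IsInvariant π r)
    (hπ : ∀ x, 0 < π x) (hr : ∀ x y, x ≠ y → 0 ≤ r x y) {u : Ω → ℝ}
    (hu : dirichletForm π r u u = 0) {x y : Ω} (hxy : 0 < r x y) : u x = u y := by
  have hterm_nonneg : ∀ x y, 0 ≤ π x * r x y * (u y - u x) ^ 2 := by
    intro x y
    rcases eq_or_ne x y with rfl | hne
    · simp
    · exact mul_nonneg (mul_nonneg (hπ x).le (hr x y hne)) (sq_nonneg _)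
  have hsum : ∑ x, ∑ y, π x * r x y * (u y - u x) ^ 2 = 0 := by
    rw [← hinv.two_mul_dirichletForm_self, hu, mul_zero]
  have hterm : π x * r x y * (u y - u x) ^ 2 = 0 := by
    rw [sum_eq_zero_iff_of_nonneg fun x _ => sum_nonneg fun y _ => hterm_nonneg x y] at hsum
    exact (sum_eq_zero_iff_of_nonneg fun y _ => hterm_nonneg x y).1 (hsum x (mem_univ x)) y
      (mem_univ y)
  have := pow_eq_zero_iff two_ne_zero |>.1 <|
    (mul_eq_zero.1 hterm).resolve_left (mul_pos (hπ x) hxy).ne'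
  linarith

theorem IsInvariant.dirichletForm_symmetrization (hinv : IsInvariant π c) (hπ : ∀ x, 0 < π x)
    (u : Ω → ℝ) : dirichletForm π (symmetrization π c) u u = dirichletForm π c u u := by
  have hweight : ∀ x y, π x * symmetrization π c x y = (π x * c x y + π y * c y x) / 2 := by
    intro x y
    simp only [symmetrization]
    field_simp [(hπ x).ne']
  have hswap : ∑ x, ∑ y, π y * c y x * (u y - u x) ^ 2 =
      ∑ x, ∑ y, π x * c x y * (u y - u x) ^ 2 := by
    rw [sum_comm]
    exact sum_congr rfl fun x _ => sum_congr rfl fun y _ => by ring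
  have hsum : ∑ x, ∑ y, π x * symmetrization π c x y * (u y - u x) ^ 2 =
      ∑ x, ∑ y, π x * c x y * (u y - u x) ^ 2 := by
    calc _ = (∑ x, ∑ y, π x * c x y * (u y - u x) ^ 2
          + ∑ x, ∑ y, π y * c y x * (u y - u x) ^ 2) / 2 := by
          simp only [← sum_add_distrib, sum_div]
          exact sum_congr rfl fun x _ => sum_congr rfl fun y _ => by rw [hweight]; ring
      _ = _ := by rw [hswap]; ring
  linarith [hinv.two_mul_dirichletForm_self u,
    (isReversible_symmetrization (c := c) hπ).isInvariant.two_mul_dirichletForm_self u]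

theorem IsInvariant.eq_of_generator_symmetrization_eq_zero (hinv : IsInvariant π c)
    (hπ : ∀ x, 0 < π x) (hc : ∀ x y, x ≠ y → 0 ≤ c x y) (hirr : IsIrreducible c) {u : Ω → ℝ}
    (hu : generator (symmetrization π c) u = 0) (x y : Ω) : u x = u y := by
  have hform : dirichletForm π c u u = 0 := by
    rw [← hinv.dirichletForm_symmetrization hπ]
    simp [dirichletForm, hu]
  exact hirr.eq_of_forall_pos (fun x y => hinv.eq_of_dirichletForm_self_eq_zero hπ hc hform) x y

/-- Conjugating `−L` by `√π` turns self-adjointness in `L²(π)` into symmetry for the Euclidean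
inner product, where the spectral theorem applies. -/
noncomputable def conjGenerator (π : Ω → ℝ) (r : Ω → Ω → ℝ) :
    EuclideanSpace ℝ Ω →ₗ[ℝ] EuclideanSpace ℝ Ω :=
  toL2 π ∘ₗ (-generator r) ∘ₗ ofL2 π

theorem inner_toL2 (hπ : ∀ x, 0 ≤ π x) (f g : Ω → ℝ) :
    ⟪toL2 π f, toL2 π g⟫ = ∑ x, π x * f x * g x := by
  simp only [PiLp.inner_apply, toL2_apply, RCLike.inner_apply, conj_trivial]
  refine sum_congr rfl fun x _ => ?_
  linear_combination f x * g x * Real.mul_self_sqrt (hπ x)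

theorem conjGenerator_toL2 (hπ : ∀ x, 0 < π x) (f : Ω → ℝ) :
    conjGenerator π r (toL2 π f) = toL2 π (-generator r f) := by
  simp [conjGenerator, ofL2_toL2 hπ]

theorem inner_conjGenerator (hπ : ∀ x, 0 < π x) (v w : EuclideanSpace ℝ Ω) :
    ⟪v, conjGenerator π r w⟫ = dirichletForm π r (ofL2 π v) (ofL2 π w) := by
  conv_lhs => rw [← toL2_ofL2 hπ v, ← toL2_ofL2 hπ w, conjGenerator_toL2 hπ,
    inner_toL2 fun x => (hπ x).le]
  rfl

theorem IsReversible.isSymmetric_conjGenerator (hrev : IsReversible π r) (hπ : ∀ x, 0 < π x) :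
    (conjGenerator π r).IsSymmetric := by
  intro v w
  rw [real_inner_comm, inner_conjGenerator hπ, inner_conjGenerator hπ, hrev.dirichletForm_comm]

theorem exists_eigenfunction_of_hasEigenvalue_conjGenerator (hπ : ∀ x, 0 < π x) {μ : ℝ}
    (hμ : Module.End.HasEigenvalue (conjGenerator π r) μ) :
    ∃ h : Ω → ℝ, h ≠ 0 ∧ ∀ x, -generator r h x = μ * h x := by
  obtain ⟨w, hw⟩ := hμ.exists_hasEigenvector
  refine ⟨ofL2 π w, fun h0 => hw.2 ?_, fun x => ?_⟩
  · rw [← toL2_ofL2 hπ w, h0, map_zero]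
  · have := hw.apply_eq_smul
    rw [← toL2_ofL2 hπ w, conjGenerator_toL2 hπ, ← map_smul] at this
    exact congrFun (toL2_injective hπ this) x

theorem toL2_mem_orthogonal_ker_conjGenerator (hπ : ∀ x, 0 < π x)
    (hker : ∀ h : Ω → ℝ, generator r h = 0 → ∀ x y, h x = h y) {u : Ω → ℝ}
    (hu : ∑ x, π x * u x = 0) : toL2 π u ∈ (LinearMap.ker (conjGenerator π r))ᗮ := by
  rw [Submodule.mem_orthogonal]
  intro k hk
  have hgen : generator r (ofL2 π k) = 0 := by
    apply neg_eq_zero.1 (toL2_injective hπ _)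
    rw [map_zero, ← conjGenerator_toL2 hπ, toL2_ofL2 hπ]
    exact hk
  rw [← toL2_ofL2 hπ k, inner_toL2 fun x => (hπ x).le]
  rcases isEmpty_or_nonempty Ω with hΩ | ⟨⟨x₀⟩⟩
  · simp
  calc ∑ x, π x * ofL2 π k x * u x = ofL2 π k x₀ * ∑ x, π x * u x := by
        rw [mul_sum]
        exact sum_congr rfl fun x _ => by rw [hker _ hgen x x₀]; ring
    _ = 0 := by rw [hu, mul_zero]

theorem IsReversible.dirichletForm_mem_Icc (hrev : IsReversible π r) (hπ : ∀ x, 0 < π x)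
    (hker : ∀ h : Ω → ℝ, generator r h = 0 → ∀ x y, h x = h y) {a b : ℝ}
    (hbounds : ∀ β, β ≠ 0 → (∃ h : Ω → ℝ, h ≠ 0 ∧ ∀ x, -generator r h x = β * h x) →
      β ∈ Set.Icc a b)
    {u : Ω → ℝ} (hu : ∑ x, π x * u x = 0) :
    dirichletForm π r u u ∈ Set.Icc (a * ∑ x, π x * u x ^ 2) (b * ∑ x, π x * u x ^ 2) := by
  have := (hrev.isSymmetric_conjGenerator hπ).inner_map_self_mem_Icc
    (fun μ hμ0 hμ => hbounds μ hμ0 (exists_eigenfunction_of_hasEigenvalue_conjGenerator hπ hμ))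
    (toL2_mem_orthogonal_ker_conjGenerator hπ hker hu)
  rw [inner_conjGenerator hπ, ofL2_toL2 hπ, ← real_inner_self_eq_norm_sq,
    inner_toL2 fun x => (hπ x).le] at this
  simpa only [mul_assoc, ← sq] using this

section ComplexEigenfunction

variable {lam : ℂ} {f g : Ω → ℝ}

theorem neg_generator_re_im_of_eigen {v : Ω → ℂ}
    (hv : ∀ x, -(∑ y, (r x y : ℂ) * (v y - v x)) = lam * v x) :
    (∀ x, -generator r (fun y => (v y).re) x = lam.re * (v x).re - lam.im * (v x).im) ∧
      ∀ x, -generator r (fun y => (v y).im) x = lam.im * (v x).re + lam.re * (v x).im := by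
  refine ⟨fun x => ?_, fun x => ?_⟩
  · simpa [generator_apply, Complex.re_sum, Complex.mul_re] using congrArg Complex.re (hv x)
  · simpa [generator_apply, Complex.im_sum, Complex.mul_im, add_comm] using
      congrArg Complex.im (hv x)

theorem IsInvariant.sum_mul_eq_zero_of_complex_eigen (hinv : IsInvariant π r) (hlam : lam ≠ 0)
    (hf : ∀ x, -generator r f x = lam.re * f x - lam.im * g x)
    (hg : ∀ x, -generator r g x = lam.im * f x + lam.re * g x) :
    ∑ x, π x * f x = 0 ∧ ∑ x, π x * g x = 0 := by
  have hre : lam.re * ∑ x, π x * f x - lam.im * ∑ x, π x * g x = 0 := by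
    simp only [mul_sum, ← sum_sub_distrib]
    rw [← neg_zero, ← hinv f, ← sum_neg_distrib]
    exact sum_congr rfl fun x _ => by rw [← mul_neg, hf]; ring
  have him : lam.im * ∑ x, π x * f x + lam.re * ∑ x, π x * g x = 0 := by
    simp only [mul_sum, ← sum_add_distrib]
    rw [← neg_zero, ← hinv g, ← sum_neg_distrib]
    exact sum_congr rfl fun x _ => by rw [← mul_neg, hg]; ring
  have hnorm : 0 < lam.re ^ 2 + lam.im ^ 2 := by
    simpa [Complex.normSq_apply, sq] using Complex.normSq_pos.2 hlam
  constructor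
  · refine (mul_eq_zero.1 ?_).resolve_left hnorm.ne'
    linear_combination lam.re * hre + lam.im * him
  · refine (mul_eq_zero.1 ?_).resolve_left hnorm.ne'
    linear_combination lam.re * him - lam.im * hre

theorem dirichletForm_add_of_complex_eigen
    (hf : ∀ x, -generator r f x = lam.re * f x - lam.im * g x)
    (hg : ∀ x, -generator r g x = lam.im * f x + lam.re * g x) :
    dirichletForm π r f f + dirichletForm π r g g =
      lam.re * (∑ x, π x * f x ^ 2 + ∑ x, π x * g x ^ 2) := by
  simp only [dirichletForm, hf, hg, mul_add, mul_sum, ← sum_add_distrib]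
  exact sum_congr rfl fun x _ => by ring

theorem sum_mul_re_sq_add_sum_mul_im_sq_pos (hπ : ∀ x, 0 < π x) {v : Ω → ℂ} (hv : v ≠ 0) :
    0 < ∑ x, π x * (v x).re ^ 2 + ∑ x, π x * (v x).im ^ 2 := by
  obtain ⟨x₀, hx₀⟩ := Function.ne_iff.1 hv
  simp only [← sum_add_distrib, ← mul_add]
  refine sum_pos' (fun x _ => mul_nonneg (hπ x).le (by positivity)) ⟨x₀, mem_univ _, ?_⟩
  refine mul_pos (hπ x₀) ?_
  simpa [Complex.normSq_apply, sq] using Complex.normSq_pos.2 hx₀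

end ComplexEigenfunction

end JumpRates

open JumpRates

theorem spectral_gap_bounds_broken_detailed_balance_general
    {Ω : Type*} [Fintype Ω]
    (c : Ω → Ω → ℝ) (π : Ω → ℝ)
    (hc : ∀ x y, x ≠ y → 0 ≤ c x y)
    (hπpos : ∀ x, 0 < π x)
    (hinv : ∀ f : Ω → ℝ, ∑ x, π x * (∑ y, c x y * (f y - f x)) = 0)
    (hirr : ∀ x y : Ω, x ≠ y → ∃ (k : ℕ) (p : Fin (k + 1) → Ω),
      p 0 = x ∧ p (Fin.last k) = y ∧ ∀ i : Fin k, 0 < c (p i.castSucc) (p i.succ))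
    (cs : Ω → Ω → ℝ)
    (hcs : ∀ x y, cs x y = (c x y + π y * c y x / π x) / 2)
    (αmin αmax : ℝ)
    -- … which bound all nonzero eigenvalues of −L_S:
    (hbounds : ∀ β : ℝ, β ≠ 0 →
      (∃ h : Ω → ℝ, h ≠ 0 ∧ ∀ x, -(∑ y, cs x y * (h y - h x)) = β * h x) →
      αmin ≤ β ∧ β ≤ αmax) :
    ∀ lam : ℂ, lam ≠ 0 →
      (∃ v : Ω → ℂ, v ≠ 0 ∧
        ∀ x, -(∑ y, (c x y : ℂ) * (v y - v x)) = lam * v x) →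
      αmin ≤ lam.re ∧ lam.re ≤ αmax := by
  rintro lam hlam ⟨v, hv, heig⟩
  obtain rfl : cs = symmetrization π c := funext₂ hcs
  have hinv : IsInvariant π c := hinv
  obtain ⟨hf, hg⟩ := neg_generator_re_im_of_eigen heig
  obtain ⟨hf0, hg0⟩ := hinv.sum_mul_eq_zero_of_complex_eigen hlam hf hg
  have hker : ∀ h : Ω → ℝ, generator (symmetrization π c) h = 0 → ∀ x y, h x = h y :=
    fun _ => hinv.eq_of_generator_symmetrization_eq_zero hπpos hc hirr
  have hrev := isReversible_symmetrization (c := c) hπpos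
  obtain ⟨hf_lo, hf_hi⟩ := hrev.dirichletForm_mem_Icc hπpos hker hbounds hf0
  obtain ⟨hg_lo, hg_hi⟩ := hrev.dirichletForm_mem_Icc hπpos hker hbounds hg0
  rw [hinv.dirichletForm_symmetrization hπpos] at hf_lo hf_hi hg_lo hg_hi
  have hsum := dirichletForm_add_of_complex_eigen (π := π) hf hg
  have hN := sum_mul_re_sq_add_sum_mul_im_sq_pos hπpos hv
  exact ⟨le_of_mul_le_mul_right (by linarith) hN, le_of_mul_le_mul_right (by linarith) hN⟩

/-- For the generator `L` of an irreducible finite-state Markov chain with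
invariant measure `π` and symmetric part `L_S` (with respect to `L²(π)`, realized by the
symmetrized rates `c_s`), if `α_min` and `α_max` are the smallest and largest nonzero
eigenvalues of `−L_S`, then every nonzero (complex) eigenvalue `λ` of `−L` satisfies
`α_min ≤ Re(λ) ≤ α_max`. -/
theorem spectral_gap_bounds_broken_detailed_balance
    {Ω : Type*} [Fintype Ω] [DecidableEq Ω] [Nonempty Ω]
    (c : Ω → Ω → ℝ) (π : Ω → ℝ)
    (hc : ∀ x y, x ≠ y → 0 ≤ c x y)
    (hπpos : ∀ x, 0 < π x) (hπsum : ∑ x, π x = 1)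
    (hinv : ∀ f : Ω → ℝ, ∑ x, π x * (∑ y, c x y * (f y - f x)) = 0)
    (hirr : ∀ x y : Ω, x ≠ y → ∃ (k : ℕ) (p : Fin (k + 1) → Ω),
      p 0 = x ∧ p (Fin.last k) = y ∧ ∀ i : Fin k, 0 < c (p i.castSucc) (p i.succ))
    (cs : Ω → Ω → ℝ)
    (hcs : ∀ x y, cs x y = (c x y + π y * c y x / π x) / 2)
    (αmin αmax : ℝ)
    -- α_min and α_max are nonzero eigenvalues of −L_S …
    (hαmin_eig : ∃ h : Ω → ℝ, h ≠ 0 ∧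
      ∀ x, -(∑ y, cs x y * (h y - h x)) = αmin * h x)
    (hαmax_eig : ∃ h : Ω → ℝ, h ≠ 0 ∧
      ∀ x, -(∑ y, cs x y * (h y - h x)) = αmax * h x)
    (hαmin_ne : αmin ≠ 0) (hαmax_ne : αmax ≠ 0)
    -- … which bound all nonzero eigenvalues of −L_S:
    (hbounds : ∀ β : ℝ, β ≠ 0 →
      (∃ h : Ω → ℝ, h ≠ 0 ∧ ∀ x, -(∑ y, cs x y * (h y - h x)) = β * h x) →
      αmin ≤ β ∧ β ≤ αmax) :
    ∀ lam : ℂ, lam ≠ 0 →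
      (∃ v : Ω → ℂ, v ≠ 0 ∧
        ∀ x, -(∑ y, (c x y : ℂ) * (v y - v x)) = lam * v x) →
      αmin ≤ lam.re ∧ lam.re ≤ αmax :=
  spectral_gap_bounds_broken_detailed_balance_general c π hc hπpos hinv hirr cs hcs αmin αmax
    hbounds
end

section
/- Let c = c_s + c_a be the decomposition of transition rates of an irreducible finite-state Markov chain with invariant measure π into reversible part c_s and antisymmetric part c_a, with q(x,y) = π(x)c(x→y). Then for every probability measure μ on Ω and every function V: Ω → ℝ, the quantity I_A(μ,V) = ∑_{x≠y} √(μ(y)/π(y)) (1 − e^{V(y)−V(x)}) √(μ(x)π(x)) c(x→y) satisfies I_A(μ,V) ≤ ∑_{x≠y} √(μ(x)μ(y)/(π(x)π(y))) [c_s(x→y) − √(c_s(x→y)² − c_a(x→y)²)] π(x). -/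
open Finset

/-!
Pair the terms `(x, y)` and `(y, x)`. Writing `a = π x c(x→y)`, `b = π y c(y→x)` and
`u = exp (V y - V x)`, the two left-hand terms add up to `S ((1 - u) a + (1 - u⁻¹) b)`
with `S = √(μ x / π x) √(μ y / π y)`, while the two right-hand terms add up to
`S (a + b - 2√(ab))`, because `2 c_s(x→y) π x = a + b` and
`(c_s(x→y)² - c_a(x→y)²) (π x)² = a b`.
The pairwise inequality is then AM-GM: `2√(ab) ≤ a u + b / u`.
-/

theorem Finset.sum_offDiag_swap {α M : Type*} [DecidableEq α] [AddCommMonoid M]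
    (s : Finset α) (f : α × α → M) :
    ∑ p ∈ s.offDiag, f p.swap = ∑ p ∈ s.offDiag, f p :=
  Finset.sum_nbij' Prod.swap Prod.swap (by simp +contextual [ne_comm])
    (by simp +contextual [ne_comm]) (by simp) (by simp) (by simp)

theorem Finset.sum_offDiag_le_of_add_swap_le {α M : Type*} [DecidableEq α]
    [AddCommMonoid M] [LinearOrder M] [IsOrderedCancelAddMonoid M] {s : Finset α}
    {f g : α × α → M}
    (h : ∀ p ∈ s.offDiag, f p + f p.swap ≤ g p + g p.swap) :
    ∑ p ∈ s.offDiag, f p ≤ ∑ p ∈ s.offDiag, g p := by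
  have hsum := Finset.sum_le_sum h
  rw [sum_add_distrib, sum_add_distrib, sum_offDiag_swap, sum_offDiag_swap, ← two_nsmul,
    ← two_nsmul] at hsum
  exact le_of_nsmul_le_nsmul_right two_ne_zero hsum

theorem Real.two_mul_sqrt_mul_le_mul_exp_add_mul_exp_neg {a b : ℝ} (ha : 0 ≤ a) (hb : 0 ≤ b)
    (t : ℝ) : 2 * √(a * b) ≤ a * Real.exp t + b * Real.exp (-t) := by
  have hab : √(a * Real.exp t) * √(b * Real.exp (-t)) = √(a * b) := by
    rw [← Real.sqrt_mul (by positivity)]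
    congr 1
    rw [mul_mul_mul_comm, ← Real.exp_add, add_neg_cancel, Real.exp_zero, mul_one]
  have := two_mul_le_add_sq (√(a * Real.exp t)) (√(b * Real.exp (-t)))
  rwa [Real.sq_sqrt (by positivity), Real.sq_sqrt (by positivity), mul_assoc, hab] at this

theorem Real.sqrt_mul_eq_sqrt_div_mul {m p : ℝ} (hm : 0 ≤ m) (hp : 0 < p) :
    √(m * p) = √(m / p) * p :=
  calc √(m * p) = √(m / p * p ^ 2) := by congr 1; field_simp
    _ = √(m / p) * p := by rw [Real.sqrt_mul (div_nonneg hm hp.le), Real.sqrt_sq hp.le]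

section RateDecomposition

variable {Ω : Type*} {c cs ca : Ω → Ω → ℝ} {π μ : Ω → ℝ} {x y : Ω}

theorem symmPart_mul_eq (hcs : ∀ x y, cs x y = (c x y + π y * c y x / π x) / 2)
    (hx : π x ≠ 0) : cs x y * π x = (π x * c x y + π y * c y x) / 2 := by
  rw [hcs]
  field_simp

theorem antisymmPart_mul_eq (hcs : ∀ x y, cs x y = (c x y + π y * c y x / π x) / 2)
    (hca : ∀ x y, ca x y = c x y - cs x y) (hx : π x ≠ 0) :
    ca x y * π x = (π x * c x y - π y * c y x) / 2 := by
  rw [hca, sub_mul, symmPart_mul_eq hcs hx]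
  ring

theorem sqrt_symmPart_sq_sub_antisymmPart_sq_mul
    (hcs : ∀ x y, cs x y = (c x y + π y * c y x / π x) / 2)
    (hca : ∀ x y, ca x y = c x y - cs x y) (hx : 0 < π x) :
    √(cs x y ^ 2 - ca x y ^ 2) * π x = √(π x * c x y * (π y * c y x)) := by
  have hprod : (cs x y ^ 2 - ca x y ^ 2) * π x ^ 2 = π x * c x y * (π y * c y x) := by
    rw [sub_mul, ← mul_pow, ← mul_pow, symmPart_mul_eq hcs hx.ne',
      antisymmPart_mul_eq hcs hca hx.ne']
    ring
  rw [← hprod, Real.sqrt_mul' _ (sq_nonneg _), Real.sqrt_sq hx.le]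

theorem sqrt_div_mul_sqrt_div_mul_symmPart_sub_eq
    (hcs : ∀ x y, cs x y = (c x y + π y * c y x / π x) / 2)
    (hca : ∀ x y, ca x y = c x y - cs x y) (hμ : 0 ≤ μ x) (hx : 0 < π x) :
    √(μ x / π x * (μ y / π y)) * (cs x y - √(cs x y ^ 2 - ca x y ^ 2)) * π x
      = √(μ x / π x) * √(μ y / π y)
        * ((π x * c x y + π y * c y x) / 2 - √(π x * c x y * (π y * c y x))) := by
  rw [Real.sqrt_mul (div_nonneg hμ hx.le), mul_assoc, sub_mul, symmPart_mul_eq hcs hx.ne',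
    sqrt_symmPart_sq_sub_antisymmPart_sq_mul hcs hca hx]

theorem sqrt_div_mul_one_sub_exp_mul_sqrt_mul_eq (V : Ω → ℝ) (hμ : 0 ≤ μ x)
    (hx : 0 < π x) :
    √(μ y / π y) * (1 - Real.exp (V y - V x)) * √(μ x * π x) * c x y
      = √(μ x / π x) * √(μ y / π y) * ((1 - Real.exp (V y - V x)) * (π x * c x y)) := by
  rw [Real.sqrt_mul_eq_sqrt_div_mul hμ hx]
  ring

theorem IA_summand_add_swap_le (hcs : ∀ x y, cs x y = (c x y + π y * c y x / π x) / 2)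
    (hca : ∀ x y, ca x y = c x y - cs x y) (V : Ω → ℝ)
    (hcxy : 0 ≤ c x y) (hcyx : 0 ≤ c y x) (hμx : 0 ≤ μ x) (hμy : 0 ≤ μ y)
    (hx : 0 < π x) (hy : 0 < π y) :
    √(μ y / π y) * (1 - Real.exp (V y - V x)) * √(μ x * π x) * c x y
        + √(μ x / π x) * (1 - Real.exp (V x - V y)) * √(μ y * π y) * c y x
      ≤ √(μ x / π x * (μ y / π y)) * (cs x y - √(cs x y ^ 2 - ca x y ^ 2)) * π x
        + √(μ y / π y * (μ x / π x)) * (cs y x - √(cs y x ^ 2 - ca y x ^ 2)) * π y := by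
  set a := π x * c x y
  set b := π y * c y x
  have hamgm := Real.two_mul_sqrt_mul_le_mul_exp_add_mul_exp_neg (mul_nonneg hx.le hcxy)
    (mul_nonneg hy.le hcyx) (V y - V x)
  rw [sqrt_div_mul_one_sub_exp_mul_sqrt_mul_eq V hμx hx,
    sqrt_div_mul_one_sub_exp_mul_sqrt_mul_eq V hμy hy,
    sqrt_div_mul_sqrt_div_mul_symmPart_sub_eq hcs hca hμx hx,
    sqrt_div_mul_sqrt_div_mul_symmPart_sub_eq hcs hca hμy hy,
    mul_comm √(μ y / π y), mul_comm b a, ← neg_sub (V y), ← mul_add, ← mul_add]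
  exact mul_le_mul_of_nonneg_left (by linarith) (by positivity)

end RateDecomposition

theorem IA_upper_bound_general
    {Ω : Type*} [Fintype Ω] [DecidableEq Ω]
    (c : Ω → Ω → ℝ) (π : Ω → ℝ)
    (hc : ∀ x y, x ≠ y → 0 ≤ c x y)
    (hπpos : ∀ x, 0 < π x)
    (cs ca : Ω → Ω → ℝ)
    (hcs : ∀ x y, cs x y = (c x y + π y * c y x / π x) / 2)
    (hca : ∀ x y, ca x y = c x y - cs x y)
    (μ : Ω → ℝ) (hμ : ∀ x, 0 ≤ μ x)
    (V : Ω → ℝ) :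
    ∑ p ∈ Finset.univ.offDiag,
        Real.sqrt (μ p.2 / π p.2) * (1 - Real.exp (V p.2 - V p.1))
          * Real.sqrt (μ p.1 * π p.1) * c p.1 p.2
    ≤ ∑ p ∈ Finset.univ.offDiag,
        Real.sqrt (μ p.1 / π p.1 * (μ p.2 / π p.2))
          * (cs p.1 p.2 - Real.sqrt (cs p.1 p.2 ^ 2 - ca p.1 p.2 ^ 2)) * π p.1 := by
  refine sum_offDiag_le_of_add_swap_le fun ⟨x, y⟩ hxy => ?_
  obtain ⟨-, -, hxy⟩ := mem_offDiag.1 hxy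
  exact IA_summand_add_swap_le hcs hca V (hc x y hxy) (hc y x (Ne.symm hxy)) (hμ x) (hμ y)
    (hπpos x) (hπpos y)

/-- For an irreducible finite-state Markov chain with rates `c = c_s + c_a`
and invariant measure `π`, for every probability measure `μ` and potential `V`, the
quantity `I_A(μ,V) = ∑_{x≠y} √(μ(y)/π(y)) (1 − e^{V(y)−V(x)}) √(μ(x)π(x)) c(x→y)` is
bounded above by
`∑_{x≠y} √(μ(x)μ(y)/(π(x)π(y))) [c_s(x→y) − √(c_s(x→y)² − c_a(x→y)²)] π(x)`. -/
theorem IA_upper_bound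
    {Ω : Type*} [Fintype Ω] [DecidableEq Ω] [Nonempty Ω]
    (c : Ω → Ω → ℝ) (π : Ω → ℝ)
    (hc : ∀ x y, x ≠ y → 0 ≤ c x y)
    (hπpos : ∀ x, 0 < π x) (hπsum : ∑ x, π x = 1)
    (hinv : ∀ f : Ω → ℝ, ∑ x, π x * (∑ y, c x y * (f y - f x)) = 0)
    (hirr : ∀ x y : Ω, x ≠ y → ∃ (k : ℕ) (p : Fin (k + 1) → Ω),
      p 0 = x ∧ p (Fin.last k) = y ∧ ∀ i : Fin k, 0 < c (p i.castSucc) (p i.succ))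
    (cs ca : Ω → Ω → ℝ)
    (hcs : ∀ x y, cs x y = (c x y + π y * c y x / π x) / 2)
    (hca : ∀ x y, ca x y = c x y - cs x y)
    (μ : Ω → ℝ) (hμ : ∀ x, 0 ≤ μ x) (hμsum : ∑ x, μ x = 1)
    (V : Ω → ℝ) :
    ∑ p ∈ Finset.univ.offDiag,
        Real.sqrt (μ p.2 / π p.2) * (1 - Real.exp (V p.2 - V p.1))
          * Real.sqrt (μ p.1 * π p.1) * c p.1 p.2
    ≤ ∑ p ∈ Finset.univ.offDiag,
        Real.sqrt (μ p.1 / π p.1 * (μ p.2 / π p.2))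
          * (cs p.1 p.2 - Real.sqrt (cs p.1 p.2 ^ 2 - ca p.1 p.2 ^ 2)) * π p.1 :=
  IA_upper_bound_general c π hc hπpos cs ca hcs hca μ hμ V
end

section
/- Let I_2(μ) = sup_{f>0} ⟨1/f, −L f⟩_μ be the Donsker–Varadhan level-2 rate functional of an irreducible finite-state Markov chain with generator L and invariant measure π, and let I_2^S(μ) = ⟨√(μ/π), −L_S √(μ/π)⟩_π be the rate functional of the symmetrized chain. Then I_2(μ) ≥ I_2^S(μ) for every probability measure μ on Ω. -/
open Finset Filter Topology

/-! Write `g = √(μ/π)`, so that `μ = π g²`. Because `π` is invariant, `∑ π L(g²) = 0`, and this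
makes the Dirichlet forms of `L` and of its symmetrization `L_S` agree at `g`:
`⟨g, -L_S g⟩_π = ⟨g, -L g⟩_π`. The test function `f = g` is not admissible where `μ` vanishes,
but `f = g + ε` is, and since `L` kills constants
`⟨1/(g + ε), -L(g + ε)⟩_μ = ∑ π g²/(g + ε) (-L g) → ⟨g, -L g⟩_π` as `ε → 0⁺`. -/

section Generator

variable {Ω : Type*} [Fintype Ω]

def generator (c : Ω → Ω → ℝ) (f : Ω → ℝ) (x : Ω) : ℝ :=
  ∑ y, c x y * (f y - f x)

theorem generator_add_const (c : Ω → Ω → ℝ) (f : Ω → ℝ) (a : ℝ) :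
    generator c (fun y => f y + a) = generator c f := by
  funext x
  simp only [generator, add_sub_add_right_eq_sub]

theorem sum_mul_generator_symmetrization (c cs : Ω → Ω → ℝ) (π : Ω → ℝ)
    (hπ : ∀ x, π x ≠ 0) (hcs : ∀ x y, cs x y = (c x y + π y * c y x / π x) / 2) (g : Ω → ℝ) :
    ∑ x, g x * generator cs g x * π x
      = ∑ x, g x * generator c g x * π x
        - (∑ x, π x * generator c (fun y => g y ^ 2) x) / 2 := by
  have hexpand : ∀ x, g x * generator cs g x * π x
      = ∑ y, (π x * c x y * (g x * (g y - g x)) + π y * c y x * (g x * (g y - g x))) / 2 := by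
    intro x
    simp only [generator, Finset.mul_sum, Finset.sum_mul]
    refine Finset.sum_congr rfl fun y _ => ?_
    rw [hcs]
    field_simp [hπ x]
  calc ∑ x, g x * generator cs g x * π x
      = ∑ x, ∑ y, π x * c x y * (g x * (g y - g x)) / 2
        + ∑ x, ∑ y, π y * c y x * (g x * (g y - g x)) / 2 := by
        simp only [hexpand, add_div, Finset.sum_add_distrib]
    _ = ∑ x, ∑ y, π x * c x y * (g x * (g y - g x)) / 2
        + ∑ x, ∑ y, π x * c x y * (g y * (g x - g y)) / 2 := by
        rw [Finset.sum_comm (f := fun x y => π y * c y x * (g x * (g y - g x)) / 2)]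
    _ = _ := by
        simp only [generator, Finset.mul_sum, Finset.sum_mul, Finset.sum_div,
          ← Finset.sum_add_distrib, ← Finset.sum_sub_distrib]
        refine Finset.sum_congr rfl fun x _ => Finset.sum_congr rfl fun y _ => ?_
        ring

theorem inv_mul_neg_generator_le (c : Ω → Ω → ℝ)
    (hc : ∀ x y, x ≠ y → 0 ≤ c x y) (f : Ω → ℝ) (hf : ∀ x, 0 < f x) (x : Ω) :
    (f x)⁻¹ * -generator c f x ≤ ∑ y, |c x y| := by
  have hrewrite : (f x)⁻¹ * -generator c f x = ∑ y, c x y * (1 - f y / f x) := by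
    simp only [generator, Finset.mul_sum, ← Finset.sum_neg_distrib]
    refine Finset.sum_congr rfl fun y _ => ?_
    field_simp [(hf x).ne']
    ring
  rw [hrewrite]
  refine Finset.sum_le_sum fun y _ => ?_
  rcases eq_or_ne x y with rfl | hxy
  · simp [(hf x).ne']
  · calc c x y * (1 - f y / f x) ≤ c x y * 1 :=
          mul_le_mul_of_nonneg_left (by linarith [div_pos (hf y) (hf x)]) (hc x y hxy)
      _ ≤ |c x y| := by rw [mul_one]; exact le_abs_self _

theorem bddAbove_range_sum_mul_inv_mul_neg_generator
    (c : Ω → Ω → ℝ) (hc : ∀ x y, x ≠ y → 0 ≤ c x y) (μ : Ω → ℝ) (hμ : ∀ x, 0 ≤ μ x) :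
    BddAbove (Set.range fun f : {f : Ω → ℝ // ∀ x, 0 < f x} =>
      ∑ x, μ x * ((f.1 x)⁻¹ * -generator c f.1 x)) := by
  refine ⟨∑ x, μ x * ∑ y, |c x y|, ?_⟩
  rintro _ ⟨f, rfl⟩
  exact Finset.sum_le_sum fun x _ =>
    mul_le_mul_of_nonneg_left (inv_mul_neg_generator_le c hc f.1 f.2 x) (hμ x)

end Generator

theorem tendsto_sq_mul_inv_add_nhdsGT_zero {t : ℝ} (ht : 0 ≤ t) :
    Tendsto (fun ε => t ^ 2 * (t + ε)⁻¹) (𝓝[>] 0) (𝓝 t) := by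
  rcases ht.eq_or_lt with rfl | ht
  · simp
  · have hcont : ContinuousAt (fun ε => t ^ 2 * (t + ε)⁻¹) 0 :=
      continuousAt_const.mul
        ((continuousAt_const.add continuousAt_id).inv₀ (by simpa using ht.ne'))
    have hval : t ^ 2 * (t + 0)⁻¹ = t := by rw [add_zero]; field_simp
    simpa only [hval] using hcont.tendsto.mono_left nhdsWithin_le_nhds

theorem level2_rate_function_lower_bound_general
    {Ω : Type*} [Fintype Ω]
    (c : Ω → Ω → ℝ) (π : Ω → ℝ)
    (hc : ∀ x y, x ≠ y → 0 ≤ c x y)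
    (hπpos : ∀ x, 0 < π x)
    (hinv : ∀ f : Ω → ℝ, ∑ x, π x * (∑ y, c x y * (f y - f x)) = 0)
    (cs : Ω → Ω → ℝ)
    (hcs : ∀ x y, cs x y = (c x y + π y * c y x / π x) / 2)
    (μ : Ω → ℝ) (hμ : ∀ x, 0 ≤ μ x) :
    (∑ x, Real.sqrt (μ x / π x)
        * (-(∑ y, cs x y * (Real.sqrt (μ y / π y) - Real.sqrt (μ x / π x)))) * π x)
    ≤ ⨆ f : {f : Ω → ℝ // ∀ x, 0 < f x},
        ∑ x, μ x * ((f.1 x)⁻¹ * (-(∑ y, c x y * (f.1 y - f.1 x)))) := by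
  set g : Ω → ℝ := fun x => Real.sqrt (μ x / π x) with hg
  have hμg : ∀ x, μ x = π x * g x ^ 2 := fun x => by
    rw [hg, Real.sq_sqrt (div_nonneg (hμ x) (hπpos x).le), mul_div_cancel₀ _ (hπpos x).ne']
  have hdirichlet : ∑ x, g x * -generator cs g x * π x = ∑ x, g x * -generator c g x * π x := by
    have hsym := sum_mul_generator_symmetrization c cs π (fun x => (hπpos x).ne') hcs g
    simp only [generator, hinv, zero_div, sub_zero] at hsym
    simp only [neg_mul, mul_neg, Finset.sum_neg_distrib, generator, hsym]
  have hlimit : Tendsto (fun ε => ∑ x, μ x * ((g x + ε)⁻¹ * -generator c g x)) (𝓝[>] 0)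
      (𝓝 (∑ x, g x * -generator c g x * π x)) := by
    refine tendsto_finsetSum _ fun x _ => ?_
    have hterm := (tendsto_sq_mul_inv_add_nhdsGT_zero (t := g x) (Real.sqrt_nonneg _)).mul_const
      (π x * -generator c g x)
    convert hterm using 2
    · rw [hμg]
      ring
    · ring
  refine hdirichlet.trans_le (le_of_tendsto hlimit ?_)
  refine eventually_nhdsWithin_of_forall fun ε (hε : 0 < ε) => ?_
  have hshift := le_ciSup (bddAbove_range_sum_mul_inv_mul_neg_generator c hc μ hμ)
    ⟨fun x => g x + ε, fun x => by positivity⟩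
  simp only [generator_add_const] at hshift
  exact hshift

/-- The Donsker–Varadhan level-2 rate functional
`I_2(μ) = sup_{f>0} ⟨1/f, −L f⟩_μ` of an irreducible finite-state Markov chain dominates
the rate functional `I_2^S(μ) = ⟨√(μ/π), −L_S √(μ/π)⟩_π` of the symmetrized chain:
`I_2(μ) ≥ I_2^S(μ)`. -/
theorem level2_rate_function_lower_bound
    {Ω : Type*} [Fintype Ω] [DecidableEq Ω] [Nonempty Ω]
    (c : Ω → Ω → ℝ) (π : Ω → ℝ)
    (hc : ∀ x y, x ≠ y → 0 ≤ c x y)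
    (hπpos : ∀ x, 0 < π x) (hπsum : ∑ x, π x = 1)
    (hinv : ∀ f : Ω → ℝ, ∑ x, π x * (∑ y, c x y * (f y - f x)) = 0)
    (hirr : ∀ x y : Ω, x ≠ y → ∃ (k : ℕ) (p : Fin (k + 1) → Ω),
      p 0 = x ∧ p (Fin.last k) = y ∧ ∀ i : Fin k, 0 < c (p i.castSucc) (p i.succ))
    (cs : Ω → Ω → ℝ)
    (hcs : ∀ x y, cs x y = (c x y + π y * c y x / π x) / 2)
    (μ : Ω → ℝ) (hμ : ∀ x, 0 ≤ μ x) (hμsum : ∑ x, μ x = 1) :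
    (∑ x, Real.sqrt (μ x / π x)
        * (-(∑ y, cs x y * (Real.sqrt (μ y / π y) - Real.sqrt (μ x / π x)))) * π x)
    ≤ ⨆ f : {f : Ω → ℝ // ∀ x, 0 < f x},
        ∑ x, μ x * ((f.1 x)⁻¹ * (-(∑ y, c x y * (f.1 y - f.1 x)))) :=
  level2_rate_function_lower_bound_general c π hc hπpos hinv cs hcs μ hμ
end

section
/- With the notation of the previous statement, the level-2 rate functional satisfies the upper bound I_2(μ) ≤ I_2^S(μ) + ∑_{x≠y} [c_s(x→y) − √(c_s(x→y)² − c_a(x→y)²)] · √(μ(x)μ(y)/(π(x)π(y))) · π(x). In particular, for finite-state Markov chains the acceleration of convergence obtainable by breaking detailed balance is bounded. -/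
/-!
Write `g = √(μ/π)` and `w x y = π x * c x y`. At a test function `f > 0` the functional equals
`∑_{x≠y} w x y g_x² (1 - f_y/f_x)`. Pairing the edges `(x, y)` and `(y, x)` and using AM-GM,
`2 √(w x y w y x) g_x g_y ≤ w x y g_x² t + w y x g_y² / t` with `t = f_y/f_x`, bounds it by
`∑_{x≠y} (w x y g_x² - √(w x y w y x) g_x g_y)` uniformly in `f`. This is the right-hand side:
`π_x² (c_s² - c_a²) = w x y w y x`, and stationarity of `π` lets one replace `c` by `c_s` in
`∑_{x≠y} w x y g_x²`.
-/

open Finset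

section PairSums

variable {α : Type*}

theorem sum_comp_swap_of_swap_mem {M : Type*} [AddCommMonoid M] {s : Finset (α × α)}
    (hs : ∀ p ∈ s, p.swap ∈ s) (F : α × α → M) :
    ∑ p ∈ s, F p.swap = ∑ p ∈ s, F p :=
  sum_nbij' Prod.swap Prod.swap hs hs (fun _ _ => rfl) (fun _ _ => rfl) (fun _ _ => rfl)

theorem sum_le_sum_of_add_swap_le {s : Finset (α × α)} (hs : ∀ p ∈ s, p.swap ∈ s)
    {F G : α × α → ℝ} (h : ∀ p ∈ s, F p + F p.swap ≤ G p + G p.swap) :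
    ∑ p ∈ s, F p ≤ ∑ p ∈ s, G p := by
  have double : ∀ H : α × α → ℝ, 2 * ∑ p ∈ s, H p = ∑ p ∈ s, (H p + H p.swap) := fun H => by
    rw [sum_add_distrib, sum_comp_swap_of_swap_mem hs]; ring
  linarith [double F, double G, sum_le_sum h]

variable [Fintype α] [DecidableEq α]

omit [DecidableEq α] in
theorem swap_mem_univ_offDiag {p : α × α} (hp : p ∈ univ.offDiag) : p.swap ∈ univ.offDiag := by
  simpa [eq_comm] using hp

theorem sum_offDiag_eq_sum_sum_of_diag_eq_zero {M : Type*} [AddCommMonoid M] (F : α → α → M)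
    (hF : ∀ x, F x x = 0) :
    ∑ p ∈ univ.offDiag, F p.1 p.2 = ∑ x, ∑ y, F x y := by
  rw [← sum_product', ← diag_union_offDiag, sum_union (disjoint_diag_offDiag _), sum_diag]
  simp [hF]

end PairSums

theorem two_mul_sqrt_mul_mul_mul_le_add {p q a b t : ℝ} (hp : 0 ≤ p) (hq : 0 ≤ q) (ht : 0 < t) :
    2 * (√(p * q) * a * b) ≤ p * a ^ 2 * t + q * b ^ 2 * t⁻¹ := by
  have hXY : √(p * t) * √(q * t⁻¹) = √(p * q) := by
    rw [← Real.sqrt_mul (by positivity)]; congr 1; field_simp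
  calc 2 * (√(p * q) * a * b) = 2 * (√(p * t) * a) * (√(q * t⁻¹) * b) := by
        rw [← hXY]; ring
    _ ≤ (√(p * t) * a) ^ 2 + (√(q * t⁻¹) * b) ^ 2 := two_mul_le_add_sq _ _
    _ = p * a ^ 2 * t + q * b ^ 2 * t⁻¹ := by
        rw [mul_pow, mul_pow, Real.sq_sqrt (by positivity), Real.sq_sqrt (by positivity)]; ring

theorem add_mul_one_sub_div_le {p q a b u v : ℝ} (hp : 0 ≤ p) (hq : 0 ≤ q)
    (hu : 0 < u) (hv : 0 < v) :
    p * a ^ 2 * (1 - v / u) + q * b ^ 2 * (1 - u / v)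
      ≤ (p * a ^ 2 - √(p * q) * a * b) + (q * b ^ 2 - √(q * p) * b * a) := by
  have amgm := two_mul_sqrt_mul_mul_mul_le_add (a := a) (b := b) hp hq (div_pos hv hu)
  rw [inv_div] at amgm
  rw [mul_comm q p]
  linarith

theorem sum_offDiag_mul_one_sub_div_le {α : Type*} [Fintype α] [DecidableEq α]
    {w : α → α → ℝ} (hw : ∀ x y, x ≠ y → 0 ≤ w x y) (g : α → ℝ) {f : α → ℝ}
    (hf : ∀ x, 0 < f x) :
    ∑ p ∈ univ.offDiag, w p.1 p.2 * g p.1 ^ 2 * (1 - f p.2 / f p.1)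
      ≤ ∑ p ∈ univ.offDiag, (w p.1 p.2 * g p.1 ^ 2 - √(w p.1 p.2 * w p.2 p.1) * g p.1 * g p.2) :=
  sum_le_sum_of_add_swap_le (fun _ => swap_mem_univ_offDiag) fun _ hp =>
    have hne := (mem_offDiag.1 hp).2.2
    add_mul_one_sub_div_le (hw _ _ hne) (hw _ _ (Ne.symm hne)) (hf _) (hf _)

section Generator

variable {Ω : Type*} [Fintype Ω] [DecidableEq Ω] {c cs ca : Ω → Ω → ℝ} {π : Ω → ℝ}

theorem sum_mul_inv_mul_neg_sum_eq_sum_offDiag (μ : Ω → ℝ) {f : Ω → ℝ} (hf : ∀ x, f x ≠ 0) :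
    ∑ x, μ x * ((f x)⁻¹ * -(∑ y, c x y * (f y - f x)))
      = ∑ p ∈ univ.offDiag, μ p.1 * c p.1 p.2 * (1 - f p.2 / f p.1) := by
  rw [sum_offDiag_eq_sum_sum_of_diag_eq_zero (fun x y => μ x * c x y * (1 - f y / f x))
    (by simp [hf])]
  refine sum_congr rfl fun x _ => ?_
  rw [← sum_neg_distrib, mul_sum, mul_sum]
  refine sum_congr rfl fun y _ => ?_
  field_simp [hf x]
  ring

theorem sum_offDiag_inflow_eq_outflow {h : Ω → ℝ} (hinv : ∑ x, π x * ∑ y, c x y * (h y - h x) = 0) :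
    ∑ p ∈ univ.offDiag, π p.2 * c p.2 p.1 * h p.1
      = ∑ p ∈ univ.offDiag, π p.1 * c p.1 p.2 * h p.1 := by
  have balance : ∑ p ∈ univ.offDiag, π p.1 * c p.1 p.2 * (h p.2 - h p.1) = 0 := by
    rw [sum_offDiag_eq_sum_sum_of_diag_eq_zero (fun x y => π x * c x y * (h y - h x))
      (by simp)]
    simpa [mul_sum, mul_assoc] using hinv
  have swap := sum_comp_swap_of_swap_mem (fun _ => swap_mem_univ_offDiag)
    (fun p => π p.1 * c p.1 p.2 * h p.2)
  simp only [Prod.fst_swap, Prod.snd_swap] at swap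
  simp only [mul_sub, sum_sub_distrib] at balance
  linarith

theorem sum_offDiag_symmPart_flux_eq (hπ : ∀ x, π x ≠ 0)
    (hcs : ∀ x y, cs x y = (c x y + π y * c y x / π x) / 2) {h : Ω → ℝ}
    (hinv : ∑ x, π x * ∑ y, c x y * (h y - h x) = 0) :
    ∑ p ∈ univ.offDiag, π p.1 * cs p.1 p.2 * h p.1
      = ∑ p ∈ univ.offDiag, π p.1 * c p.1 p.2 * h p.1 := by
  have mean : ∀ x y, π x * cs x y * h x = (π x * c x y * h x + π y * c y x * h x) / 2 := by
    intro x y; rw [hcs]; field_simp [hπ x]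
  simp only [mean, ← sum_div, sum_add_distrib, sum_offDiag_inflow_eq_outflow hinv]
  ring

omit [Fintype Ω] [DecidableEq Ω] in
theorem mul_sqrt_sq_sub_sq_eq {x y : Ω} (hπ : 0 < π x)
    (hcs : cs x y = (c x y + π y * c y x / π x) / 2) (hca : ca x y = c x y - cs x y) :
    π x * √(cs x y ^ 2 - ca x y ^ 2) = √(π x * c x y * (π y * c y x)) := by
  have : π x * c x y * (π y * c y x) = π x ^ 2 * (cs x y ^ 2 - ca x y ^ 2) := by
    rw [hca, hcs]; field_simp; ring
  rw [this, Real.sqrt_mul (sq_nonneg _), Real.sqrt_sq hπ.le]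

theorem sum_mul_neg_sum_mul_add_sum_offDiag_eq (hπ : ∀ x, 0 < π x)
    (hcs : ∀ x y, cs x y = (c x y + π y * c y x / π x) / 2)
    (hca : ∀ x y, ca x y = c x y - cs x y) (g : Ω → ℝ)
    (hinv : ∑ x, π x * ∑ y, c x y * (g y ^ 2 - g x ^ 2) = 0) :
    (∑ x, g x * (-(∑ y, cs x y * (g y - g x))) * π x)
        + ∑ p ∈ univ.offDiag,
          (cs p.1 p.2 - √(cs p.1 p.2 ^ 2 - ca p.1 p.2 ^ 2)) * (g p.1 * g p.2) * π p.1
      = ∑ p ∈ univ.offDiag, (π p.1 * c p.1 p.2 * g p.1 ^ 2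
          - √(π p.1 * c p.1 p.2 * (π p.2 * c p.2 p.1)) * g p.1 * g p.2) := by
  have dirichlet : ∑ x, g x * (-(∑ y, cs x y * (g y - g x))) * π x
      = ∑ p ∈ univ.offDiag, π p.1 * cs p.1 p.2 * (g p.1 ^ 2 - g p.1 * g p.2) := by
    rw [sum_offDiag_eq_sum_sum_of_diag_eq_zero
      (fun x y => π x * cs x y * (g x ^ 2 - g x * g y)) (fun _ => by ring)]
    refine sum_congr rfl fun x _ => ?_
    rw [← sum_neg_distrib, mul_sum, sum_mul]
    exact sum_congr rfl fun y _ => by ring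
  calc _ = ∑ p ∈ univ.offDiag, (π p.1 * cs p.1 p.2 * g p.1 ^ 2
          - π p.1 * √(cs p.1 p.2 ^ 2 - ca p.1 p.2 ^ 2) * g p.1 * g p.2) := by
        rw [dirichlet, ← sum_add_distrib]
        exact sum_congr rfl fun p _ => by ring
    _ = _ := by
        rw [sum_sub_distrib, sum_sub_distrib,
          sum_offDiag_symmPart_flux_eq (fun x => (hπ x).ne') hcs (h := fun x => g x ^ 2) hinv]
        congr 1
        exact sum_congr rfl fun p _ => by rw [mul_sqrt_sq_sub_sq_eq (hπ _) (hcs _ _) (hca _ _)]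

end Generator

theorem level2_rate_function_upper_bound_general
    {Ω : Type*} [Fintype Ω] [DecidableEq Ω]
    (c : Ω → Ω → ℝ) (π : Ω → ℝ)
    (hc : ∀ x y, x ≠ y → 0 ≤ c x y)
    (hπpos : ∀ x, 0 < π x)
    (hinv : ∀ f : Ω → ℝ, ∑ x, π x * (∑ y, c x y * (f y - f x)) = 0)
    (cs ca : Ω → Ω → ℝ)
    (hcs : ∀ x y, cs x y = (c x y + π y * c y x / π x) / 2)
    (hca : ∀ x y, ca x y = c x y - cs x y)
    (μ : Ω → ℝ) (hμ : ∀ x, 0 ≤ μ x) :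
    (⨆ f : {f : Ω → ℝ // ∀ x, 0 < f x},
        ∑ x, μ x * ((f.1 x)⁻¹ * (-(∑ y, c x y * (f.1 y - f.1 x)))))
    ≤ (∑ x, Real.sqrt (μ x / π x)
          * (-(∑ y, cs x y * (Real.sqrt (μ y / π y) - Real.sqrt (μ x / π x)))) * π x)
      + ∑ p ∈ Finset.univ.offDiag,
          (cs p.1 p.2 - Real.sqrt (cs p.1 p.2 ^ 2 - ca p.1 p.2 ^ 2))
            * Real.sqrt (μ p.1 / π p.1 * (μ p.2 / π p.2)) * π p.1 := by
  set g : Ω → ℝ := fun x => √(μ x / π x)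
  have hμg : ∀ x, μ x = π x * g x ^ 2 := fun x => by
    rw [Real.sq_sqrt (div_nonneg (hμ x) (hπpos x).le), mul_div_cancel₀ _ (hπpos x).ne']
  have hsqrt : ∀ x y, √(μ x / π x * (μ y / π y)) = g x * g y := fun x y =>
    Real.sqrt_mul (div_nonneg (hμ x) (hπpos x).le) _
  have : Nonempty {f : Ω → ℝ // ∀ x, 0 < f x} := ⟨⟨1, fun _ => one_pos⟩⟩
  refine ciSup_le fun ⟨f, hf⟩ => ?_
  calc _ = ∑ p ∈ univ.offDiag, π p.1 * c p.1 p.2 * g p.1 ^ 2 * (1 - f p.2 / f p.1) := by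
        rw [sum_mul_inv_mul_neg_sum_eq_sum_offDiag μ fun x => (hf x).ne']
        exact sum_congr rfl fun p _ => by rw [hμg]; ring
    _ ≤ ∑ p ∈ univ.offDiag, (π p.1 * c p.1 p.2 * g p.1 ^ 2
          - √(π p.1 * c p.1 p.2 * (π p.2 * c p.2 p.1)) * g p.1 * g p.2) :=
        sum_offDiag_mul_one_sub_div_le (w := fun x y => π x * c x y)
          (fun x y hxy => mul_nonneg (hπpos x).le (hc x y hxy)) g hf
    _ = _ := by
        simp only [hsqrt]
        exact (sum_mul_neg_sum_mul_add_sum_offDiag_eq hπpos hcs hca g (hinv _)).symm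

/-- Upper bound on the level-2 rate functional:
`I_2(μ) ≤ I_2^S(μ) + ∑_{x≠y} [c_s(x→y) − √(c_s(x→y)² − c_a(x→y)²)] √(μ(x)μ(y)/(π(x)π(y))) π(x)`,
so for finite-state Markov chains the acceleration obtainable by breaking detailed
balance is bounded. -/
theorem level2_rate_function_upper_bound
    {Ω : Type*} [Fintype Ω] [DecidableEq Ω] [Nonempty Ω]
    (c : Ω → Ω → ℝ) (π : Ω → ℝ)
    (hc : ∀ x y, x ≠ y → 0 ≤ c x y)
    (hπpos : ∀ x, 0 < π x) (hπsum : ∑ x, π x = 1)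
    (hinv : ∀ f : Ω → ℝ, ∑ x, π x * (∑ y, c x y * (f y - f x)) = 0)
    (hirr : ∀ x y : Ω, x ≠ y → ∃ (k : ℕ) (p : Fin (k + 1) → Ω),
      p 0 = x ∧ p (Fin.last k) = y ∧ ∀ i : Fin k, 0 < c (p i.castSucc) (p i.succ))
    (cs ca : Ω → Ω → ℝ)
    (hcs : ∀ x y, cs x y = (c x y + π y * c y x / π x) / 2)
    (hca : ∀ x y, ca x y = c x y - cs x y)
    (μ : Ω → ℝ) (hμ : ∀ x, 0 ≤ μ x) (hμsum : ∑ x, μ x = 1) :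
    (⨆ f : {f : Ω → ℝ // ∀ x, 0 < f x},
        ∑ x, μ x * ((f.1 x)⁻¹ * (-(∑ y, c x y * (f.1 y - f.1 x)))))
    ≤ (∑ x, Real.sqrt (μ x / π x)
          * (-(∑ y, cs x y * (Real.sqrt (μ y / π y) - Real.sqrt (μ x / π x)))) * π x)
      + ∑ p ∈ Finset.univ.offDiag,
          (cs p.1 p.2 - Real.sqrt (cs p.1 p.2 ^ 2 - ca p.1 p.2 ^ 2))
            * Real.sqrt (μ p.1 / π p.1 * (μ p.2 / π p.2)) * π p.1 :=
  level2_rate_function_upper_bound_general c π hc hπpos hinv cs ca hcs hca μ hμ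
end

section
/- Under the assumptions of MFT with quasipotential V (so J_S(ρ) = −χ(ρ)∇(δV/δρ) with δV/δρ vanishing on ∂Λ), for every divergence-free square-integrable vector field j on Λ one has ∫_Λ J_S(ρ)·χ(ρ)^{−1} j dx = 0. Consequently, the contraction I_2(ρ) = inf_{∇·j = 0} I_{2.5}(ρ, j) of the irreversible level-2.5 rate functional satisfies I_2(ρ) ≥ (1/4)∫_Λ J_S(ρ)·χ(ρ)^{−1} J_S(ρ) dx = I_2^{rev}(ρ). -/
open MeasureTheory Matrix

lemma countable_isolated_zeros (h : ℝ → ℝ) (hd : Differentiable ℝ h) :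
    {t : ℝ | h t = 0 ∧ deriv h t ≠ 0}.Countable := by
  set T := {t : ℝ | h t = 0 ∧ deriv h t ≠ 0} with hT
  have key : ∀ t ∈ T, ∃ q : ℚ × ℚ, t ∈ Set.Ioo (q.1 : ℝ) (q.2 : ℝ) ∧
      ∀ s ∈ T, s ∈ Set.Ioo (q.1 : ℝ) (q.2 : ℝ) → s = t := by
    intro t ht
    obtain ⟨ht0, ht1⟩ := ht
    have hda : HasDerivAt h (deriv h t) t := (hd t).hasDerivAt
    have hslope := hasDerivAt_iff_tendsto_slope.mp hda
    have hne : ∀ᶠ s in nhdsWithin t {t}ᶜ, slope h t s ≠ 0 :=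
      hslope.eventually (eventually_ne_nhds ht1)
    have hne2 : ∀ᶠ s in nhdsWithin t {t}ᶜ, h s ≠ 0 := by
      filter_upwards [hne, self_mem_nhdsWithin] with s hs hs'
      intro hzero
      apply hs
      simp [slope, hzero, ht0]
    rw [eventually_nhdsWithin_iff] at hne2
    rw [Metric.eventually_nhds_iff] at hne2
    obtain ⟨ε, hε, hball⟩ := hne2
    obtain ⟨q1, hq1⟩ := exists_rat_btwn (show t - ε < t by linarith)
    obtain ⟨q2, hq2⟩ := exists_rat_btwn (show t < t + ε by linarith)
    refine ⟨(q1, q2), ⟨hq1.2, hq2.1⟩, ?_⟩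
    rintro s ⟨hs0, -⟩ ⟨hs1, hs2⟩
    by_contra hst
    have hdist : dist s t < ε := by
      rw [Real.dist_eq, abs_lt]
      constructor <;> simp only at hs1 hs2 <;> nlinarith [hq1.1, hq2.2]
    exact hball hdist (by simpa using hst) hs0
  choose! f hf1 hf2 using key
  have : Set.InjOn (fun t => Encodable.encode (f t)) T := by
    intro s hs t ht hst
    have : f s = f t := Encodable.encode_injective hst
    exact hf2 t ht s hs (this ▸ hf1 s hs)
  exact Set.countable_iff_exists_injOn.mpr ⟨_, this⟩

lemma level_set_fderiv_zero {n : ℕ} (ψ : (Fin (n+1) → ℝ) → ℝ) (hψ : ContDiff ℝ (⊤:ℕ∞) ψ) :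
    volume {x : Fin (n+1) → ℝ | ψ x = 0 ∧ fderiv ℝ ψ x ≠ 0} = 0 := by
  have hcont : Continuous ψ := hψ.continuous
  have hfc : Continuous (fderiv ℝ ψ) := hψ.continuous_fderiv (by simp)
  -- reduce to coordinates
  have hsub : {x : Fin (n+1) → ℝ | ψ x = 0 ∧ fderiv ℝ ψ x ≠ 0} ⊆
      ⋃ i : Fin (n+1), {x | ψ x = 0 ∧ fderiv ℝ ψ x (Pi.single i 1) ≠ 0} := by
    rintro x ⟨hx0, hx1⟩
    by_contra hc
    simp only [Set.mem_iUnion, Set.mem_setOf_eq, not_exists, not_and, not_not] at hc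
    apply hx1
    ext v
    have : v = ∑ i, v i • (Pi.single i (1:ℝ) : Fin (n+1) → ℝ) := by
      ext k; simp [Pi.single_apply]
    rw [this]
    simp only [map_sum, _root_.map_smul]
    simp [hc _ hx0]
  refine measure_mono_null hsub (measure_iUnion_null fun i => ?_)
  -- per-coordinate set
  set Si := {x : Fin (n+1) → ℝ | ψ x = 0 ∧ fderiv ℝ ψ x (Pi.single i 1) ≠ 0} with hSi
  -- auxiliary : the insertion map and its properties
  have hins : ∀ (w : Fin n → ℝ) (t : ℝ),
      i.insertNth t w = i.insertNth (0:ℝ) w + t • (Pi.single i (1:ℝ) : Fin (n+1) → ℝ) := by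
    intro w t
    funext j
    refine i.succAboveCases ?_ ?_ j
    · simp
    · intro k
      simp [Fin.succAbove_ne i k, Pi.single_eq_of_ne (Fin.succAbove_ne i k)]
  have hslope : ∀ (w : Fin n → ℝ) (t : ℝ),
      HasDerivAt (fun s : ℝ => i.insertNth s w) (Pi.single i (1:ℝ) : Fin (n+1) → ℝ) t := by
    intro w t
    have h1 : HasDerivAt (fun s : ℝ => (i.insertNth (0:ℝ) w : Fin (n+1) → ℝ) + s • (Pi.single i 1 : Fin (n+1) → ℝ))
        (Pi.single i 1) t := by
      simpa using ((hasDerivAt_id t).smul_const (Pi.single i 1 : Fin (n+1) → ℝ)).const_add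
        (i.insertNth (0:ℝ) w : Fin (n+1) → ℝ)
    exact h1.congr_of_eventuallyEq (Filter.Eventually.of_forall fun s => (hins w s))
  -- continuity of insertion
  have hinsc : Continuous (fun p : (Fin n → ℝ) × ℝ => (i.insertNth p.2 p.1 : Fin (n+1) → ℝ)) := by
    refine continuous_pi fun j => ?_
    refine i.succAboveCases ?_ ?_ j
    · simp only [Fin.insertNth_apply_same]
      exact continuous_snd
    · intro k
      simp only [Fin.insertNth_apply_succAbove]
      exact (continuous_apply k).comp continuous_fst
  -- the set A in product coordinates
  set A : Set ((Fin n → ℝ) × ℝ) := {p | ψ (i.insertNth p.2 p.1) = 0 ∧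
      fderiv ℝ ψ (i.insertNth p.2 p.1) (Pi.single i 1) ≠ 0} with hA
  have hAmeas : MeasurableSet A := by
    have h1 : IsClosed {p : (Fin n → ℝ) × ℝ | ψ (i.insertNth p.2 p.1) = 0} :=
      isClosed_eq (hcont.comp hinsc) continuous_const
    have h2 : IsOpen {p : (Fin n → ℝ) × ℝ | fderiv ℝ ψ (i.insertNth p.2 p.1) (Pi.single i 1) ≠ 0} := by
      have hc2 : Continuous (fun p : (Fin n → ℝ) × ℝ =>
          fderiv ℝ ψ (i.insertNth p.2 p.1) (Pi.single i 1)) := by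
        exact (ContinuousLinearMap.apply ℝ ℝ (Pi.single i 1 : Fin (n+1) → ℝ)).continuous.comp
          (hfc.comp hinsc)
      exact isOpen_compl_iff.mpr (isClosed_eq hc2 continuous_const)
    exact (h1.measurableSet).inter h2.measurableSet
  -- Si is preimage of A under measure preserving map
  have hSipre : Si = (fun x : Fin (n+1) → ℝ => (i.removeNth x, x i)) ⁻¹' A := by
    ext x
    simp only [Set.mem_preimage, hA, Set.mem_setOf_eq, hSi, Fin.insertNth_self_removeNth]
  have hmp : MeasurePreserving (fun x : Fin (n+1) → ℝ => (i.removeNth x, x i))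
      volume ((volume : Measure (Fin n → ℝ)).prod (volume : Measure ℝ)) := by
    have h1 := volume_preserving_piFinSuccAbove (fun _ : Fin (n+1) => ℝ) i
    have h2 : MeasurePreserving (Prod.swap : ℝ × (Fin n → ℝ) → (Fin n → ℝ) × ℝ)
        ((volume : Measure ℝ).prod (volume : Measure (Fin n → ℝ)))
        ((volume : Measure (Fin n → ℝ)).prod (volume : Measure ℝ)) :=
      Measure.measurePreserving_swap
    have h3 := h2.comp (by rwa [Measure.volume_eq_prod] at h1)
    exact h3
  rw [hSipre, hmp.measure_preimage hAmeas.nullMeasurableSet]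
  -- now Fubini : sections are countable
  rw [MeasureTheory.Measure.measure_prod_null hAmeas]
  refine Filter.Eventually.of_forall fun w => ?_
  show volume (Prod.mk w ⁻¹' A) = 0
  have hsec : (Prod.mk w ⁻¹' A) = {t : ℝ | (fun t => ψ (i.insertNth t w)) t = 0 ∧
      deriv (fun t => ψ (i.insertNth t w)) t ≠ 0} := by
    ext t
    have hder : HasDerivAt (fun t => ψ (i.insertNth t w))
        (fderiv ℝ ψ (i.insertNth t w) (Pi.single i 1)) t :=
      (hψ.differentiable (by simp) (i.insertNth t w)).hasFDerivAt.comp_hasDerivAt t (hslope w t)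
    simp only [Set.mem_preimage, hA, Set.mem_setOf_eq, hder.deriv]
  rw [hsec]
  exact Set.Countable.measure_zero (countable_isolated_zeros _ (fun t =>
    ((hψ.differentiable (by simp) _).hasFDerivAt.comp_hasDerivAt t (hslope w t)).differentiableAt)) _

lemma exists_theta : ∃ θ : ℝ → ℝ, ContDiff ℝ (⊤ : ℕ∞) θ ∧ (∀ t, t^2 < 1 → θ t = 0) ∧
    (∀ t, 2 < t^2 → deriv θ t = 1) ∧ ∃ C, ∀ t, |deriv θ t| ≤ C := by
  refine ⟨fun t => t * Real.smoothTransition (t^2 - 1), ?_, ?_, ?_, ?_⟩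
  case _ =>
    exact contDiff_id.mul (Real.smoothTransition.contDiff.comp
      ((contDiff_id.pow 2).sub contDiff_const))
  case _ =>
    intro t ht
    show t * Real.smoothTransition (t^2-1) = 0
    rw [Real.smoothTransition.zero_of_nonpos (show t^2-1 ≤ 0 by linarith), mul_zero]
  case _ =>
    intro t ht
    have hV : IsOpen {s : ℝ | 2 < s^2} := isOpen_lt continuous_const (continuous_pow 2)
    have heq : (fun s => s * Real.smoothTransition (s^2 - 1)) =ᶠ[nhds t] (fun s => s) := by
      filter_upwards [hV.mem_nhds ht] with s hs
      rw [Real.smoothTransition.one_of_one_le (show (1:ℝ) ≤ s^2 - 1 by have : 2 < s^2 := hs; linarith),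
        mul_one]
    rw [heq.deriv_eq, deriv_id'']
  case _ =>
    set θ := fun t : ℝ => t * Real.smoothTransition (t^2 - 1) with hθdef
    have hθ : ContDiff ℝ (⊤ : ℕ∞) θ := contDiff_id.mul (Real.smoothTransition.contDiff.comp
      ((contDiff_id.pow 2).sub contDiff_const))
    have hdc : Continuous (deriv θ) := hθ.continuous_deriv (by exact_mod_cast le_top)
    obtain ⟨C0, hC0⟩ := (isCompact_Icc (a := (-2:ℝ)) (b := 2)).exists_bound_of_continuousOn
      hdc.continuousOn
    refine ⟨max C0 1, fun t => ?_⟩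
    rcases le_or_gt (|t|) 2 with h | h
    · have := hC0 t (by rw [Set.mem_Icc]; exact abs_le.mp h)
      rw [Real.norm_eq_abs] at this
      exact this.trans (le_max_left _ _)
    · have h2 : 2 < t^2 := by nlinarith [abs_nonneg t, sq_abs t]
      have hV : IsOpen {s : ℝ | 2 < s^2} := isOpen_lt continuous_const (continuous_pow 2)
      have heq : θ =ᶠ[nhds t] (fun s => s) := by
        filter_upwards [hV.mem_nhds h2] with s hs
        rw [hθdef]
        simp only
        rw [Real.smoothTransition.one_of_one_le (show (1:ℝ) ≤ s^2 - 1 by have : 2 < s^2 := hs; linarith),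
          mul_one]
      rw [heq.deriv_eq, deriv_id'']
      simp [le_max_right]

lemma ibp_zero {n : ℕ} {Λ : Set (Fin (n+1) → ℝ)} (hΛo : IsOpen Λ)
    (hbdd : Bornology.IsBounded Λ)
    (F : (Fin (n+1) → ℝ) → (Fin (n+1) → ℝ)) (hF : ContDiff ℝ (⊤:ℕ∞) F)
    {U : Set (Fin (n+1) → ℝ)} (hU : IsOpen U) (hUF : ∀ x ∈ U, F x = 0)
    (hfr : frontier Λ ⊆ U) :
    ∫ x in Λ, ∑ i, fderiv ℝ F x (Pi.single i 1) i = 0 := by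
  classical
  set H := Λ.indicator F with hHdef
  have hHF : ∀ x ∈ Λ, H =ᶠ[nhds x] F := by
    intro x hx
    filter_upwards [hΛo.mem_nhds hx] with y hy
    exact Set.indicator_of_mem hy F
  have hHU : ∀ x ∈ U, H =ᶠ[nhds x] (fun _ => 0) := by
    intro x hx
    filter_upwards [hU.mem_nhds hx] with y hy
    by_cases hyΛ : y ∈ Λ
    · rw [hHdef, Set.indicator_of_mem hyΛ, hUF y hy]
    · rw [hHdef, Set.indicator_of_notMem hyΛ]
  have hHout : ∀ x ∉ closure Λ, H =ᶠ[nhds x] (fun _ => 0) := by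
    intro x hx
    filter_upwards [(isClosed_closure.isOpen_compl).mem_nhds hx] with y hy
    exact Set.indicator_of_notMem (fun h => hy (subset_closure h)) F
  have hcover : ∀ x : Fin (n+1) → ℝ, x ∈ Λ ∨ x ∈ U ∨ x ∉ closure Λ := by
    intro x
    by_cases h1 : x ∈ Λ
    · exact Or.inl h1
    by_cases h2 : x ∈ closure Λ
    · exact Or.inr (Or.inl (hfr ⟨h2, by rwa [hΛo.interior_eq]⟩))
    · exact Or.inr (Or.inr h2)
  have hHsm : ContDiff ℝ (⊤:ℕ∞) H := by
    rw [contDiff_iff_contDiffAt]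
    intro x
    rcases hcover x with hx | hx | hx
    · exact hF.contDiffAt.congr_of_eventuallyEq (hHF x hx)
    · exact contDiffAt_const.congr_of_eventuallyEq (hHU x hx)
    · exact contDiffAt_const.congr_of_eventuallyEq (hHout x hx)
  have hdHΛ : ∀ x ∈ Λ, fderiv ℝ H x = fderiv ℝ F x := fun x hx => (hHF x hx).fderiv_eq
  have hdH0 : ∀ x ∉ Λ, fderiv ℝ H x = 0 := by
    intro x hx
    rcases hcover x with h | h | h
    · exact absurd h hx
    · rw [(hHU x h).fderiv_eq]; exact fderiv_const_apply 0
    · rw [(hHout x h).fderiv_eq]; exact fderiv_const_apply 0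
  -- the box
  obtain ⟨r, hr⟩ := hbdd.subset_closedBall 0
  set r' : ℝ := max r 0 with hr'def
  have hΛr : Λ ⊆ Metric.closedBall 0 r' :=
    hr.trans (Metric.closedBall_subset_closedBall (le_max_left _ _))
  set a : Fin (n+1) → ℝ := fun _ => -(r'+1) with hadef
  set b : Fin (n+1) → ℝ := fun _ => (r'+1) with hbdef
  have hr'0 : 0 ≤ r' := le_max_right _ _
  have hle : a ≤ b := fun i => by simp [hadef, hbdef]; linarith
  have hnorm : ∀ y ∈ Λ, ‖y‖ ≤ r' := by
    intro y hy
    simpa [Metric.mem_closedBall, dist_zero_right] using hΛr hy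
  have hHzero : ∀ y : Fin (n+1) → ℝ, (∃ i, |y i| = r'+1) → H y = 0 := by
    rintro y ⟨i, hi⟩
    refine Set.indicator_of_notMem (fun hy => ?_) F
    have h1 : |y i| ≤ ‖y‖ := by
      simpa [Real.norm_eq_abs] using norm_le_pi_norm y i
    have := hnorm y hy
    rw [hi] at h1
    linarith
  -- divergence of H is continuous
  have hdivHc : Continuous (fun x => ∑ i, fderiv ℝ H x (Pi.single i 1) i) := by
    refine continuous_finset_sum _ fun i _ => ?_
    have hfd := hHsm.continuous_fderiv (by simp)
    exact (continuous_apply i).comp (hfd.clm_apply continuous_const)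
  -- divergence theorem
  have hdiv := MeasureTheory.integral_divergence_of_hasFDerivAt_off_countable a b hle H
    (fun x => fderiv ℝ H x) ∅ Set.countable_empty hHsm.continuous.continuousOn
    (fun x _ => (hHsm.differentiable (by simp) x).hasFDerivAt)
    (hdivHc.continuousOn.integrableOn_compact isCompact_Icc)
  -- faces vanish
  have hfaces : ∀ i : Fin (n+1),
      ((∫ x in Set.Icc (a ∘ i.succAbove) (b ∘ i.succAbove), H (i.insertNth (b i) x) i) -
       ∫ x in Set.Icc (a ∘ i.succAbove) (b ∘ i.succAbove), H (i.insertNth (a i) x) i) = 0 := by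
    intro i
    have h1 : ∀ x : Fin n → ℝ, H (i.insertNth (b i) x) i = 0 := by
      intro x
      rw [hHzero _ ⟨i, by
        rw [Fin.insertNth_apply_same]
        simp only [hbdef]
        exact abs_of_nonneg (by linarith)⟩]
      rfl
    have h2 : ∀ x : Fin n → ℝ, H (i.insertNth (a i) x) i = 0 := by
      intro x
      rw [hHzero _ ⟨i, by
        rw [Fin.insertNth_apply_same]
        simp only [hadef]
        rw [abs_of_nonpos (by linarith), neg_neg]⟩]
      rfl
    simp only [h1, h2, integral_zero, sub_zero]
  rw [Finset.sum_congr rfl (fun i _ => hfaces i), Finset.sum_const_zero] at hdiv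
  -- restrict to Λ
  have hΛIcc : Λ ⊆ Set.Icc a b := by
    intro y hy
    have h := hnorm y hy
    have hab : ∀ i, |y i| ≤ r' := fun i =>
      le_trans (by simpa [Real.norm_eq_abs] using norm_le_pi_norm y i) h
    refine ⟨fun i => ?_, fun i => ?_⟩
    · have := (abs_le.mp (hab i)).1
      simp only [hadef]
      linarith
    · have := (abs_le.mp (hab i)).2
      simp only [hbdef]
      linarith
  have hres : ∫ x in Set.Icc a b, ∑ i, fderiv ℝ H x (Pi.single i 1) i =
      ∫ x in Λ, ∑ i, fderiv ℝ H x (Pi.single i 1) i := by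
    refine setIntegral_eq_of_subset_of_forall_diff_eq_zero measurableSet_Icc hΛIcc ?_
    rintro x ⟨-, hx⟩
    rw [Finset.sum_eq_zero]
    intro i _
    rw [hdH0 x hx]
    rfl
  have hcongr : ∫ x in Λ, ∑ i, fderiv ℝ H x (Pi.single i 1) i =
      ∫ x in Λ, ∑ i, fderiv ℝ F x (Pi.single i 1) i := by
    refine setIntegral_congr_fun hΛo.measurableSet fun x hx => ?_
    rw [Finset.sum_congr rfl fun i _ => by rw [hdHΛ x hx]]
  rw [← hcongr, ← hres, hdiv]

section MatrixFacts
variable {d : ℕ} (χ χinv : Matrix (Fin d) (Fin d) ℝ)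

lemma chi_facts (hsym : χ.IsSymm) (hinv : χinv * χ = 1) :
    χ * χinv = 1 ∧ χinvᵀ = χinv := by
  have h2 : χ * χinv = 1 := mul_eq_one_comm.mp hinv
  refine ⟨h2, ?_⟩
  have h3 : χinvᵀ * χ = 1 := by
    have := congrArg Matrix.transpose h2
    rwa [Matrix.transpose_mul, Matrix.transpose_one, hsym.eq] at this
  calc χinvᵀ = χinvᵀ * (χ * χinv) := by rw [h2, mul_one]
    _ = (χinvᵀ * χ) * χinv := by rw [mul_assoc]
    _ = χinv := by rw [h3, one_mul]

lemma swap_dot (hsym : χ.IsSymm) (hinv : χinv * χ = 1) (v w : Fin d → ℝ) :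
    v ⬝ᵥ χinv *ᵥ w = w ⬝ᵥ χinv *ᵥ v := by
  obtain ⟨-, hst⟩ := chi_facts χ χinv hsym hinv
  rw [Matrix.dotProduct_mulVec, ← Matrix.mulVec_transpose, hst, dotProduct_comm]

lemma neg_chi_dot (hsym : χ.IsSymm) (hinv : χinv * χ = 1) (g w : Fin d → ℝ) :
    (-(χ *ᵥ g)) ⬝ᵥ χinv *ᵥ w = -(g ⬝ᵥ w) := by
  obtain ⟨h2, -⟩ := chi_facts χ χinv hsym hinv
  rw [neg_dotProduct, dotProduct_comm, Matrix.dotProduct_mulVec,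
    ← Matrix.mulVec_transpose, hsym.eq, Matrix.mulVec_mulVec, h2, Matrix.one_mulVec,
    dotProduct_comm]

lemma chi_inv_dot_nonneg (hsym : χ.IsSymm) (hinv : χinv * χ = 1)
    (hpos : ∀ v : Fin d → ℝ, v ≠ 0 → 0 < v ⬝ᵥ χ *ᵥ v) (v : Fin d → ℝ) :
    0 ≤ v ⬝ᵥ χinv *ᵥ v := by
  obtain ⟨h2, -⟩ := chi_facts χ χinv hsym hinv
  set w := χinv *ᵥ v with hw
  by_cases hw0 : w = 0
  · rw [hw0, dotProduct_zero]
  · have hv : χ *ᵥ w = v := by rw [hw, Matrix.mulVec_mulVec, h2, Matrix.one_mulVec]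
    have : v ⬝ᵥ w = w ⬝ᵥ χ *ᵥ w := by rw [← hv, dotProduct_comm, hv]
    rw [this]
    exact (hpos w hw0).le
end MatrixFacts

lemma key_ortho {d : ℕ} {Λ : Set (Fin d → ℝ)} (hΛmeas : MeasurableSet Λ) (hΛo : IsOpen Λ)
    (hbdd : Bornology.IsBounded Λ)
    (ψ : (Fin d → ℝ) → ℝ) (hψ : ContDiff ℝ (⊤:ℕ∞) ψ)
    (hbdry : ∀ x ∈ frontier Λ, ψ x = 0)
    (j : (Fin d → ℝ) → (Fin d → ℝ)) (hj : ContDiff ℝ (⊤:ℕ∞) j)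
    (hdiv : ∀ x ∈ Λ, ∑ i, fderiv ℝ (fun y => j y i) x (Pi.single i 1) = 0)
    (hint : IntegrableOn (fun x => ∑ i, fderiv ℝ ψ x (Pi.single i 1) * j x i) Λ volume) :
    ∫ x in Λ, ∑ i, fderiv ℝ ψ x (Pi.single i 1) * j x i = 0 := by
  rcases d with - | n
  · have : ∀ x : Fin 0 → ℝ, ∑ i : Fin 0, fderiv ℝ ψ x (Pi.single i 1) * j x i = 0 := by
      intro x; simp
    rw [setIntegral_congr_fun hΛmeas (fun x _ => this x), integral_zero]
  obtain ⟨θ, hθ, hθ0, hθ1, C, hC⟩ := exists_theta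
  have h1top : (1:WithTop ℕ∞) ≤ ((⊤:ℕ∞):WithTop ℕ∞) := by exact_mod_cast le_top
  have hψd : Differentiable ℝ ψ := hψ.differentiable (by simp)
  have hjd : Differentiable ℝ j := hj.differentiable (by simp)
  have hθd : Differentiable ℝ θ := hθ.differentiable (by simp)
  -- the identity for each k
  have Ek : ∀ k : ℕ, ∫ x in Λ,
      deriv θ ((k+1:ℝ) * ψ x) * (∑ i, fderiv ℝ ψ x (Pi.single i 1) * j x i) = 0 := by
    intro k
    set c : ℝ := (k+1:ℝ) with hcdef
    have hc : (0:ℝ) < c := by positivity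
    set Fk : (Fin (n+1) → ℝ) → (Fin (n+1) → ℝ) := fun y => ((1/c) * θ (c * ψ y)) • j y with hFkdef
    have hFksm : ContDiff ℝ (⊤:ℕ∞) Fk :=
      (contDiff_const.mul (hθ.comp (contDiff_const.mul hψ))).smul hj
    have hU : IsOpen {x : Fin (n+1) → ℝ | (c * ψ x)^2 < 1} :=
      isOpen_lt (((continuous_const.mul hψ.continuous).pow 2)) continuous_const
    have hUF : ∀ x ∈ {x : Fin (n+1) → ℝ | (c * ψ x)^2 < 1}, Fk x = 0 := by
      intro x hx
      rw [hFkdef]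
      simp only
      rw [hθ0 _ hx, mul_zero, zero_smul]
    have hfr : frontier Λ ⊆ {x : Fin (n+1) → ℝ | (c * ψ x)^2 < 1} := by
      intro x hx
      simp only [Set.mem_setOf_eq, hbdry x hx, mul_zero]
      norm_num
    have hibp := ibp_zero hΛo hbdd Fk hFksm hU hUF hfr
    rw [← hibp]
    refine setIntegral_congr_fun hΛmeas fun x hx => ?_
    -- pointwise computation of the divergence
    have hψx : HasFDerivAt ψ (fderiv ℝ ψ x) x := (hψd x).hasFDerivAt
    have hinner : HasFDerivAt (fun y => c * ψ y) (c • fderiv ℝ ψ x) x := hψx.const_mul c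
    have hθx : HasDerivAt θ (deriv θ (c * ψ x)) (c * ψ x) := (hθd (c * ψ x)).hasDerivAt
    have hcomp : HasFDerivAt (fun y => θ (c * ψ y))
        (deriv θ (c * ψ x) • (c • fderiv ℝ ψ x)) x := hθx.comp_hasFDerivAt x hinner
    have hψk : HasFDerivAt (fun y => (1/c) * θ (c * ψ y))
        ((1/c) • (deriv θ (c * ψ x) • (c • fderiv ℝ ψ x))) x := hcomp.const_mul (1/c)
    have hjx : HasFDerivAt j (fderiv ℝ j x) x := (hjd x).hasFDerivAt
    have hFk : HasFDerivAt Fk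
        (((1/c) * θ (c * ψ x)) • fderiv ℝ j x +
          ((1/c) • (deriv θ (c * ψ x) • (c • fderiv ℝ ψ x))).smulRight (j x)) x :=
      hψk.smul hjx
    rw [hFk.fderiv]
    have hproj : ∀ i : Fin (n+1), fderiv ℝ (fun y => j y i) x (Pi.single i 1) =
        fderiv ℝ j x (Pi.single i 1) i := by
      intro i
      have h : HasFDerivAt (fun y => j y i)
          ((ContinuousLinearMap.proj i).comp (fderiv ℝ j x)) x :=
        HasFDerivAt.comp (𝕜 := ℝ) x (ContinuousLinearMap.hasFDerivAt
          (ContinuousLinearMap.proj (R := ℝ) (φ := fun _ : Fin (n+1) => ℝ) i)) hjx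
      rw [h.fderiv]
      rfl
    have hdivx : ∑ i, fderiv ℝ j x (Pi.single i 1) i = 0 := by
      rw [← hdiv x hx]
      exact Finset.sum_congr rfl fun i _ => (hproj i).symm
    simp only [ContinuousLinearMap.add_apply, ContinuousLinearMap.coe_smul', Pi.smul_apply,
      ContinuousLinearMap.smulRight_apply, Pi.add_apply, smul_eq_mul]
    rw [Finset.sum_add_distrib]
    have e1 : ∑ i, ((1/c) * θ (c * ψ x)) * fderiv ℝ j x (Pi.single i 1) i = 0 := by
      rw [← Finset.mul_sum, hdivx, mul_zero]
    rw [e1, zero_add]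
    rw [Finset.mul_sum]
    refine Finset.sum_congr rfl fun i _ => ?_
    field_simp
  -- dominated convergence
  set g : (Fin (n+1) → ℝ) → ℝ := fun x => ∑ i, fderiv ℝ ψ x (Pi.single i 1) * j x i with hgdef
  have hgc : Continuous g := by
    refine continuous_finset_sum _ fun i _ => Continuous.mul ?_ ?_
    · exact ((hψ.continuous_fderiv (by simp)).clm_apply continuous_const)
    · exact (continuous_apply i).comp hj.continuous
  have hFseqc : ∀ k : ℕ, Continuous fun x => deriv θ ((k+1:ℝ) * ψ x) * g x := fun k =>
    ((hθ.continuous_deriv h1top).comp (continuous_const.mul hψ.continuous)).mul hgc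
  have hmeas : ∀ k : ℕ, AEStronglyMeasurable (fun x => deriv θ ((k+1:ℝ) * ψ x) * g x)
      (volume.restrict Λ) := fun k => (hFseqc k).aestronglyMeasurable
  have hbound_int : Integrable (fun x => C * |g x|) (volume.restrict Λ) := hint.abs.const_mul C
  have hbound : ∀ k : ℕ, ∀ᵐ x ∂(volume.restrict Λ),
      ‖deriv θ ((k+1:ℝ) * ψ x) * g x‖ ≤ C * |g x| := by
    intro k
    refine Filter.Eventually.of_forall fun x => ?_
    rw [Real.norm_eq_abs, abs_mul]
    exact mul_le_mul_of_nonneg_right (hC _) (abs_nonneg _)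
  have hae : ∀ᵐ x ∂(volume.restrict Λ), ¬(ψ x = 0 ∧ fderiv ℝ ψ x ≠ 0) := by
    have h0 := level_set_fderiv_zero ψ hψ
    have h1 : ∀ᵐ x ∂(volume : Measure (Fin (n+1) → ℝ)), ¬(ψ x = 0 ∧ fderiv ℝ ψ x ≠ 0) := by
      simpa using (MeasureTheory.measure_eq_zero_iff_ae_notMem (μ := volume)).mp h0
    exact Filter.Eventually.filter_mono (ae_mono Measure.restrict_le_self) h1
  have hlim : ∀ᵐ x ∂(volume.restrict Λ),
      Filter.Tendsto (fun k : ℕ => deriv θ ((k+1:ℝ) * ψ x) * g x) Filter.atTop (nhds (g x)) := by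
    filter_upwards [hae] with x hx
    by_cases hx0 : ψ x = 0
    · have hgx : g x = 0 := by
        have hf0 : fderiv ℝ ψ x = 0 := by
          by_contra hne
          exact hx ⟨hx0, hne⟩
        rw [hgdef]
        simp [hf0]
      simp only [hgx, mul_zero]
      exact tendsto_const_nhds
    · have habs : 0 < |ψ x| := abs_pos.mpr hx0
      obtain ⟨K, hK⟩ := exists_nat_ge (2 / |ψ x|)
      refine Filter.Tendsto.congr' ?_ tendsto_const_nhds
      rw [Filter.EventuallyEq, Filter.eventually_atTop]
      refine ⟨K, fun k hk => ?_⟩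
      have h2 : 2 < ((k+1:ℝ) * ψ x)^2 := by
        have hk1 : (2 / |ψ x|) ≤ (k:ℝ) := hK.trans (by exact_mod_cast hk)
        have h3 : 2 ≤ (k:ℝ) * |ψ x| := by
          rw [div_le_iff₀ habs] at hk1
          linarith
        have h4 : ((k+1:ℝ) * ψ x)^2 = ((k+1:ℝ) * |ψ x|)^2 := by
          rw [mul_pow, mul_pow, sq_abs]
        rw [h4]
        nlinarith [abs_nonneg (ψ x)]
      rw [hθ1 _ h2, one_mul]
  have htendsto := MeasureTheory.tendsto_integral_of_dominated_convergence _ hmeas hbound_int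
    hbound hlim
  have hzero : Filter.Tendsto (fun k : ℕ => (0:ℝ)) Filter.atTop
      (nhds (∫ x in Λ, g x)) := by
    refine Filter.Tendsto.congr (fun k => Ek k) htendsto
  have := tendsto_nhds_unique hzero tendsto_const_nhds
  rw [← this]

/-- In MFT with quasipotential (so `J_S = −χ∇ψ₀` where `ψ₀ = δV/δρ`
vanishes on `∂Λ`), every divergence-free square-integrable current `j` is orthogonal to
`J_S` in the `χ^{−1}`-weighted inner product: `∫_Λ J_S·χ^{−1}j dx = 0`.  Consequently the
contraction `I_2(ρ) = inf_{∇·j=0} I_{2.5}(ρ,j)` satisfies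
`I_2(ρ) ≥ (1/4)∫ J_S·χ^{−1}J_S dx = I_2^{rev}(ρ)`. -/
theorem level2_contraction_lower_bound_MFT
    {d : ℕ} (Λ : Set (Fin d → ℝ)) (hΛmeas : MeasurableSet Λ) (hΛopen : IsOpen Λ)
    (hbdd : Bornology.IsBounded Λ)
    (χ χinv : (Fin d → ℝ) → Matrix (Fin d) (Fin d) ℝ)
    (hχsym : ∀ x, (χ x).IsSymm)
    (hχpos : ∀ x, ∀ v : Fin d → ℝ, v ≠ 0 → 0 < v ⬝ᵥ (χ x).mulVec v)
    (hχinv : ∀ x, χinv x * χ x = 1)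
    (ψ0 : (Fin d → ℝ) → ℝ) (hψ0 : ContDiff ℝ (⊤ : ℕ∞) ψ0)
    (hψ0bdry : ∀ x ∈ frontier Λ, ψ0 x = 0)
    (JS JA : (Fin d → ℝ) → (Fin d → ℝ))
    (hJS : ∀ x, JS x = -(χ x).mulVec (fun i => fderiv ℝ ψ0 x (Pi.single i 1)))
    (hHJ : ∫ x in Λ, JA x ⬝ᵥ (χinv x).mulVec (JS x) = 0)
    (hJSint : IntegrableOn (fun x => JS x ⬝ᵥ (χinv x).mulVec (JS x)) Λ volume)
    (hJAint : IntegrableOn (fun x => JA x ⬝ᵥ (χinv x).mulVec (JA x)) Λ volume)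
    (hcross : IntegrableOn (fun x => JA x ⬝ᵥ (χinv x).mulVec (JS x)) Λ volume) :
    (∀ j : (Fin d → ℝ) → (Fin d → ℝ), ContDiff ℝ (⊤ : ℕ∞) j →
        (∀ x ∈ Λ, ∑ i, fderiv ℝ (fun y => j y i) x (Pi.single i 1) = 0) →
        IntegrableOn (fun x => JS x ⬝ᵥ (χinv x).mulVec (j x)) Λ volume →
        ∫ x in Λ, JS x ⬝ᵥ (χinv x).mulVec (j x) = 0) ∧
    (1/4 : ℝ) * (∫ x in Λ, JS x ⬝ᵥ (χinv x).mulVec (JS x))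
      ≤ ⨅ j : {j : (Fin d → ℝ) → (Fin d → ℝ) //
            ContDiff ℝ (⊤ : ℕ∞) j ∧
            (∀ x ∈ Λ, ∑ i, fderiv ℝ (fun y => j y i) x (Pi.single i 1) = 0) ∧
            IntegrableOn
              (fun x => (j x - (JS x + JA x)) ⬝ᵥ (χinv x).mulVec (j x - (JS x + JA x)))
              Λ volume ∧
            IntegrableOn (fun x => JS x ⬝ᵥ (χinv x).mulVec (j x)) Λ volume ∧
            IntegrableOn (fun x => JA x ⬝ᵥ (χinv x).mulVec (j x)) Λ volume ∧
            IntegrableOn (fun x => j x ⬝ᵥ (χinv x).mulVec (j x)) Λ volume},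
          (1/4 : ℝ) * ∫ x in Λ,
            (j.1 x - (JS x + JA x)) ⬝ᵥ (χinv x).mulVec (j.1 x - (JS x + JA x)) := by
  -- pointwise rewriting of JS against an arbitrary vector
  have hpt : ∀ (x : Fin d → ℝ) (w : Fin d → ℝ),
      JS x ⬝ᵥ (χinv x) *ᵥ w = -(∑ i, fderiv ℝ ψ0 x (Pi.single i 1) * w i) := by
    intro x w
    rw [hJS x]
    exact neg_chi_dot (χ x) (χinv x) (hχsym x) (hχinv x) _ w
  -- Part 1 : orthogonality
  have horth : ∀ j : (Fin d → ℝ) → (Fin d → ℝ), ContDiff ℝ (⊤ : ℕ∞) j →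
      (∀ x ∈ Λ, ∑ i, fderiv ℝ (fun y => j y i) x (Pi.single i 1) = 0) →
      IntegrableOn (fun x => JS x ⬝ᵥ (χinv x).mulVec (j x)) Λ volume →
      ∫ x in Λ, JS x ⬝ᵥ (χinv x).mulVec (j x) = 0 := by
    intro j hjsm hjdiv hjint
    have hint2 : IntegrableOn (fun x => ∑ i, fderiv ℝ ψ0 x (Pi.single i 1) * j x i) Λ volume := by
      have hneg : IntegrableOn (fun x => -(JS x ⬝ᵥ (χinv x).mulVec (j x))) Λ volume := hjint.neg
      refine IntegrableOn.congr_fun hneg (fun x _ => ?_) hΛmeas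
      rw [hpt x (j x), neg_neg]
    have hko := key_ortho hΛmeas hΛopen hbdd ψ0 (hψ0.of_le (by simp)) hψ0bdry j
      (hjsm.of_le (by simp)) hjdiv hint2
    calc ∫ x in Λ, JS x ⬝ᵥ (χinv x).mulVec (j x)
        = ∫ x in Λ, -(∑ i, fderiv ℝ ψ0 x (Pi.single i 1) * j x i) :=
          setIntegral_congr_fun hΛmeas fun x _ => hpt x (j x)
      _ = -∫ x in Λ, ∑ i, fderiv ℝ ψ0 x (Pi.single i 1) * j x i := integral_neg _
      _ = 0 := by rw [hko, neg_zero]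
  refine ⟨horth, ?_⟩
  -- Part 2
  have hswap : ∀ (x : Fin d → ℝ) (v w : Fin d → ℝ),
      v ⬝ᵥ (χinv x) *ᵥ w = w ⬝ᵥ (χinv x) *ᵥ v := fun x =>
    swap_dot (χ x) (χinv x) (hχsym x) (hχinv x)
  have hnn : ∀ (x : Fin d → ℝ) (v : Fin d → ℝ), 0 ≤ v ⬝ᵥ (χinv x) *ᵥ v := fun x =>
    chi_inv_dot_nonneg (χ x) (χinv x) (hχsym x) (hχinv x) (hχpos x)
  haveI hne : Nonempty {j : (Fin d → ℝ) → (Fin d → ℝ) //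
      ContDiff ℝ (⊤ : ℕ∞) j ∧
      (∀ x ∈ Λ, ∑ i, fderiv ℝ (fun y => j y i) x (Pi.single i 1) = 0) ∧
      IntegrableOn
        (fun x => (j x - (JS x + JA x)) ⬝ᵥ (χinv x).mulVec (j x - (JS x + JA x))) Λ volume ∧
      IntegrableOn (fun x => JS x ⬝ᵥ (χinv x).mulVec (j x)) Λ volume ∧
      IntegrableOn (fun x => JA x ⬝ᵥ (χinv x).mulVec (j x)) Λ volume ∧
      IntegrableOn (fun x => j x ⬝ᵥ (χinv x).mulVec (j x)) Λ volume} := by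
    refine ⟨⟨fun _ => 0, contDiff_const, ?_, ?_, ?_, ?_, ?_⟩⟩
    · intro x _
      refine Finset.sum_eq_zero fun i _ => ?_
      simp
    · -- (0 - (JS+JA)) Q (0 - (JS+JA)) integrable
      have hint : IntegrableOn (fun x => JS x ⬝ᵥ (χinv x) *ᵥ JS x +
          (JA x ⬝ᵥ (χinv x) *ᵥ JS x + (JA x ⬝ᵥ (χinv x) *ᵥ JS x + JA x ⬝ᵥ (χinv x) *ᵥ JA x)))
          Λ volume := hJSint.add (hcross.add (hcross.add hJAint))
      refine IntegrableOn.congr_fun hint (fun x _ => ?_) hΛmeas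
      have e3 := hswap x (JS x) (JA x)
      simp only [zero_sub, Matrix.mulVec_neg, dotProduct_neg, neg_dotProduct,
        neg_neg, Matrix.mulVec_add, add_dotProduct, dotProduct_add]
      linear_combination -e3
    · refine (integrableOn_zero (s := Λ)).congr_fun (fun x _ => ?_) hΛmeas
      simp
    · refine (integrableOn_zero (s := Λ)).congr_fun (fun x _ => ?_) hΛmeas
      simp
    · refine (integrableOn_zero (s := Λ)).congr_fun (fun x _ => ?_) hΛmeas
      simp
  refine le_ciInf fun jj => ?_
  obtain ⟨j, hjsm, hjdiv, hintdiff, hintSj, hintAj, hintjj⟩ := jj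
  simp only
  -- expansion of the quadratic form
  have hI1int : IntegrableOn
      (fun x => (j x - JA x) ⬝ᵥ (χinv x) *ᵥ (j x - JA x)) Λ volume := by
    have h : IntegrableOn (fun x => j x ⬝ᵥ (χinv x) *ᵥ j x -
        (JA x ⬝ᵥ (χinv x) *ᵥ j x + JA x ⬝ᵥ (χinv x) *ᵥ j x) + JA x ⬝ᵥ (χinv x) *ᵥ JA x)
        Λ volume := (hintjj.sub (hintAj.add hintAj)).add hJAint
    refine IntegrableOn.congr_fun h (fun x _ => ?_) hΛmeas
    have e2 := hswap x (j x) (JA x)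
    simp only [Matrix.mulVec_sub, dotProduct_sub, sub_dotProduct]
    linear_combination e2
  have hexp : ∀ x, (j x - (JS x + JA x)) ⬝ᵥ (χinv x) *ᵥ (j x - (JS x + JA x)) =
      (j x - JA x) ⬝ᵥ (χinv x) *ᵥ (j x - JA x) +
      (JS x ⬝ᵥ (χinv x) *ᵥ JS x - 2 * (JS x ⬝ᵥ (χinv x) *ᵥ j x) +
        2 * (JA x ⬝ᵥ (χinv x) *ᵥ JS x)) := by
    intro x
    have e1 := hswap x (j x) (JS x)
    have e3 := hswap x (JS x) (JA x)
    simp only [Matrix.mulVec_sub, Matrix.mulVec_add, dotProduct_sub,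
      dotProduct_add, sub_dotProduct, add_dotProduct]
    linear_combination -e1 + e3
  have hsplit : ∫ x in Λ, (j x - (JS x + JA x)) ⬝ᵥ (χinv x) *ᵥ (j x - (JS x + JA x)) =
      (∫ x in Λ, (j x - JA x) ⬝ᵥ (χinv x) *ᵥ (j x - JA x)) +
      ((∫ x in Λ, JS x ⬝ᵥ (χinv x) *ᵥ JS x) -
        2 * (∫ x in Λ, JS x ⬝ᵥ (χinv x) *ᵥ j x) +
        2 * (∫ x in Λ, JA x ⬝ᵥ (χinv x) *ᵥ JS x)) := by
    have h5 : IntegrableOn (fun x => 2 * (JS x ⬝ᵥ (χinv x) *ᵥ j x)) Λ volume :=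
      hintSj.const_mul 2
    have h4 : IntegrableOn (fun x => 2 * (JA x ⬝ᵥ (χinv x) *ᵥ JS x)) Λ volume :=
      hcross.const_mul 2
    have h3 : IntegrableOn (fun x => JS x ⬝ᵥ (χinv x) *ᵥ JS x -
        2 * (JS x ⬝ᵥ (χinv x) *ᵥ j x)) Λ volume := hJSint.sub h5
    have h2 : IntegrableOn (fun x => JS x ⬝ᵥ (χinv x) *ᵥ JS x -
        2 * (JS x ⬝ᵥ (χinv x) *ᵥ j x) + 2 * (JA x ⬝ᵥ (χinv x) *ᵥ JS x)) Λ volume := h3.add h4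
    rw [setIntegral_congr_fun hΛmeas (fun x _ => hexp x)]
    rw [integral_add hI1int h2, integral_add h3 h4, integral_sub hJSint h5,
      integral_const_mul, integral_const_mul]
  have hortho_j : ∫ x in Λ, JS x ⬝ᵥ (χinv x) *ᵥ j x = 0 := horth j hjsm hjdiv hintSj
  have hI1nn : 0 ≤ ∫ x in Λ, (j x - JA x) ⬝ᵥ (χinv x) *ᵥ (j x - JA x) :=
    setIntegral_nonneg hΛmeas fun x _ => hnn x _
  rw [hsplit, hortho_j, hHJ]
  linarith
end

section
/- Consider the irreversible zero-range process with rates c(x→y) = e^{(V(x)−V(y))/2} + k_{x,y} e^{V(x)}, where k_{x,y} = −k_{y,x}, ∑_{y: y~x} k_{x,y} = 0 for all x, and |k_{x,y}| < e^{−(V(x)+V(y))/2} (so all rates are positive). Then the grand-canonical product measure π with fugacity φ(x) = e^{−V(x)−λ} remains invariant for the generator of this irreversible process, although the detailed balance condition π(x-marginal) fails whenever some k_{x,y} ≠ 0. -/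
/-!
Write `π η = ∏ x, p x (η x)` with `p x m = φ x ^ m / (z x * gfact m)`, so that
`p x (m + 1) * g (m + 1) = φ x * p x m`. Substituting `η = ξ + δₓ` in the jump term `x → y`
(configurations with `η x = 0` contribute nothing) turns `π η * g (η x)` into `φ x * π ξ` and
`η^{x,y}` into `ξ + δ_y`. With `A w = ∑ ξ, π ξ * f (ξ + δ_w)` the expectation of `L f` becomes
`∑ x, ∑ y, φ x * c x y * (A y - A x)`, which vanishes as soon as the flux balance
`∑ x, φ x * c x y = φ y * ∑ x, c y x` holds. For the irreversible rates
`φ x * c x y - φ y * c y x = 2 e^{-λ} k x y` along edges, so flux balance is the zero row sum of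
`k`, while detailed balance would force `k = 0`.
-/

open Finset

namespace ZeroRange

variable {S : Type*}

theorem summable_prod_apply [Fintype S] [DecidableEq S] {p : S → ℕ → ℝ}
    (hp : ∀ x m, 0 ≤ p x m) (hps : ∀ x, Summable (p x)) :
    Summable fun η : S → ℕ => ∏ x, p x (η x) := by
  refine summable_of_sum_le (c := ∏ x, ∑' m, p x m)
    (fun η => prod_nonneg fun x _ => hp x (η x)) fun u => ?_
  set N := u.sup fun η => univ.sup η
  have hu : u ⊆ Fintype.piFinset fun _ => range (N + 1) := fun η hη =>
    Fintype.mem_piFinset.2 fun x => mem_range_succ_iff.2 <|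
      (le_sup (mem_univ x)).trans (le_sup (f := fun η => univ.sup η) hη)
  calc ∑ η ∈ u, ∏ x, p x (η x)
      ≤ ∑ η ∈ Fintype.piFinset fun _ => range (N + 1), ∏ x, p x (η x) :=
        sum_le_sum_of_subset_of_nonneg hu fun η _ _ => prod_nonneg fun x _ => hp x (η x)
    _ = ∏ x, ∑ m ∈ range (N + 1), p x m := (prod_univ_sum _ _).symm
    _ ≤ ∏ x, ∑' m, p x m :=
        prod_le_prod (fun x _ => sum_nonneg fun m _ => hp x m)
          fun x _ => (hps x).sum_le_tsum _ fun m _ => hp x m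

def jump [DecidableEq S] (η : S → ℕ) (x y : S) : S → ℕ :=
  if η x = 0 then η else fun w => η w - (if w = x then 1 else 0) + (if w = y then 1 else 0)

theorem jump_of_eq_zero [DecidableEq S] {η : S → ℕ} {x : S} (h : η x = 0) (y : S) :
    jump η x y = η :=
  if_pos h

theorem jump_add_single [DecidableEq S] (ξ : S → ℕ) (x y : S) :
    jump (ξ + Pi.single x 1) x y = ξ + Pi.single y 1 := by
  rw [jump, if_neg (by simp)]
  funext w
  simp only [Pi.add_apply, Pi.single_apply]
  split_ifs <;> omega

theorem sub_single_add_single [DecidableEq S] {η : S → ℕ} {x : S} (h : η x ≠ 0) :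
    η - Pi.single x 1 + Pi.single x 1 = η := by
  funext w
  simp only [Pi.add_apply, Pi.sub_apply, Pi.single_apply]
  split_ifs with hw
  · subst hw; omega
  · omega

theorem prod_add_single_mul [Fintype S] [DecidableEq S] {p : S → ℕ → ℝ} {g : ℕ → ℝ}
    {φ : S → ℝ} (hpg : ∀ x m, p x (m + 1) * g (m + 1) = φ x * p x m) (ξ : S → ℕ) (x : S) :
    (∏ w, p w ((ξ + Pi.single x 1 : S → ℕ) w)) * g (ξ x + 1) = φ x * ∏ w, p w (ξ w) := by
  have hrest : ∏ w ∈ univ.erase x, p w ((ξ + Pi.single x 1 : S → ℕ) w) =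
      ∏ w ∈ univ.erase x, p w (ξ w) :=
    prod_congr rfl fun w hw => by simp [ne_of_mem_erase hw]
  rw [← mul_prod_erase _ _ (mem_univ x), ← mul_prod_erase _ _ (mem_univ x), hrest]
  simp only [Pi.add_apply, Pi.single_eq_same]
  linear_combination (∏ w ∈ univ.erase x, p w (ξ w)) * hpg x (ξ x)

theorem sum_sum_mul_sub_eq_zero [Fintype S] (φ : S → ℝ) (c : S → S → ℝ) (A : S → ℝ)
    (hflux : ∀ y, ∑ x, φ x * c x y = φ y * ∑ x, c y x) :
    ∑ x, ∑ y, φ x * c x y * (A y - A x) = 0 := by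
  simp only [mul_sub, sum_sub_distrib]
  rw [sum_comm, sub_eq_zero]
  refine sum_congr rfl fun y _ => ?_
  rw [← sum_mul, hflux, mul_sum, sum_mul]

section Invariance

variable [Fintype S] [DecidableEq S] {p : S → ℕ → ℝ} {g : ℕ → ℝ} {φ : S → ℝ}

theorem hasSum_generator_term (hpg : ∀ x m, p x (m + 1) * g (m + 1) = φ x * p x m)
    (c : S → S → ℝ) (f : (S → ℕ) → ℝ) {A : S → ℝ}
    (hA : ∀ w, HasSum (fun ξ : S → ℕ => (∏ v, p v (ξ v)) * f (ξ + Pi.single w 1)) (A w))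
    (x y : S) :
    HasSum (fun η => (∏ v, p v (η v)) * ((f (jump η x y) - f η) * g (η x) * c x y))
      (φ x * c x y * (A y - A x)) := by
  have hrange : ∀ η ∉ Set.range fun ξ : S → ℕ => ξ + Pi.single x 1,
      (∏ v, p v (η v)) * ((f (jump η x y) - f η) * g (η x) * c x y) = 0 := by
    intro η hη
    have hηx : η x = 0 := by
      by_contra h
      exact hη ⟨η - Pi.single x 1, sub_single_add_single h⟩
    simp [jump_of_eq_zero hηx]
  refine ((add_left_injective (Pi.single x 1)).hasSum_iff hrange).mp ?_
  refine (((hA y).sub (hA x)).mul_left (φ x * c x y)).congr_fun fun ξ => ?_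
  have hξ := prod_add_single_mul hpg ξ x
  simp only [Function.comp_apply, jump_add_single, Pi.add_apply, Pi.single_eq_same] at hξ ⊢
  linear_combination (c x y * (f (ξ + Pi.single y 1) - f (ξ + Pi.single x 1))) * hξ

theorem tsum_mul_generator_eq_zero (hp : ∀ x m, 0 ≤ p x m) (hps : ∀ x, Summable (p x))
    (hpg : ∀ x m, p x (m + 1) * g (m + 1) = φ x * p x m) (c : S → S → ℝ)
    (hflux : ∀ y, ∑ x, φ x * c x y = φ y * ∑ x, c y x)
    (f : (S → ℕ) → ℝ) (hf : ∃ M, ∀ η, |f η| ≤ M) :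
    ∑' η : S → ℕ, (∏ v, p v (η v)) *
      ∑ x, ∑ y, (f (jump η x y) - f η) * g (η x) * c x y = 0 := by
  obtain ⟨M, hM⟩ := hf
  have hπ := summable_prod_apply hp hps
  have hA : ∀ w, Summable fun ξ : S → ℕ => (∏ v, p v (ξ v)) * f (ξ + Pi.single w 1) :=
    fun w => (hπ.mul_right M).of_norm_bounded fun ξ => by
      rw [norm_mul, Real.norm_of_nonneg (prod_nonneg fun v _ => hp v (ξ v)), Real.norm_eq_abs]
      exact mul_le_mul_of_nonneg_left (hM _) (prod_nonneg fun v _ => hp v (ξ v))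
  have hsum := hasSum_sum (s := univ) fun x _ => hasSum_sum (s := univ) fun y _ =>
    hasSum_generator_term hpg c f (fun w => (hA w).hasSum) x y
  simp only [← mul_sum] at hsum
  rw [hsum.tsum_eq, sum_sum_mul_sub_eq_zero φ c _ hflux]

end Invariance

theorem gfactorial_pos {g : ℕ → ℝ} (hg : ∀ k, 0 < k → 0 < g k) {gfact : ℕ → ℝ}
    (h0 : gfact 0 = 1) (hsucc : ∀ m, gfact (m + 1) = gfact m * g (m + 1)) (m : ℕ) :
    0 < gfact m := by
  induction m with
  | zero => rw [h0]; exact one_pos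
  | succ m ih => rw [hsucc]; exact mul_pos ih (hg _ m.succ_pos)

theorem pow_succ_div_mul {gfact : ℕ → ℝ} {a : ℝ} {m : ℕ} (hsucc : gfact (m + 1) = gfact m * a)
    (ha : a ≠ 0) (φ z : ℝ) :
    φ ^ (m + 1) / (z * gfact (m + 1)) * a = φ * (φ ^ m / (z * gfact m)) := by
  rw [hsucc, ← mul_assoc, div_mul_eq_mul_div, mul_div_mul_right _ _ ha, pow_succ', mul_div_assoc]

noncomputable def irreversibleRate (nbr : S → S → Prop) [DecidableRel nbr] (V : S → ℝ)
    (k : S → S → ℝ) (x y : S) : ℝ :=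
  if nbr x y then Real.exp ((V x - V y) / 2) + k x y * Real.exp (V x) else 0

section IrreversibleRate

variable {nbr : S → S → Prop} [DecidableRel nbr] {V : S → ℝ} {k : S → S → ℝ}

theorem exp_mul_irreversibleRate_sub (hsymm : ∀ x y, nbr x y → nbr y x)
    (hanti : ∀ x y, k x y = -k y x) (lam : ℝ) (x y : S) :
    Real.exp (-V x - lam) * irreversibleRate nbr V k x y -
        Real.exp (-V y - lam) * irreversibleRate nbr V k y x =
      2 * Real.exp (-lam) * if nbr x y then k x y else 0 := by
  by_cases hxy : nbr x y
  · rw [irreversibleRate, irreversibleRate, if_pos hxy, if_pos (hsymm x y hxy), if_pos hxy]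
    have hsym : Real.exp (-V x - lam) * Real.exp ((V x - V y) / 2) =
        Real.exp (-V y - lam) * Real.exp ((V y - V x) / 2) := by
      rw [← Real.exp_add, ← Real.exp_add]; ring_nf
    have hcancel (w : S) : Real.exp (-V w - lam) * Real.exp (V w) = Real.exp (-lam) := by
      rw [← Real.exp_add]; ring_nf
    linear_combination hsym + k x y * hcancel x - k y x * hcancel y - Real.exp (-lam) * hanti x y
  · rw [irreversibleRate, irreversibleRate, if_neg hxy, if_neg fun hyx => hxy (hsymm y x hyx),
      if_neg hxy]
    ring

theorem sum_exp_mul_irreversibleRate [Fintype S] (hsymm : ∀ x y, nbr x y → nbr y x)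
    (hanti : ∀ x y, k x y = -k y x) (hrow : ∀ x, ∑ y, (if nbr x y then k x y else 0) = 0)
    (lam : ℝ) (y : S) :
    ∑ x, Real.exp (-V x - lam) * irreversibleRate nbr V k x y =
      Real.exp (-V y - lam) * ∑ x, irreversibleRate nbr V k y x := by
  have hanti' (x : S) : (if nbr x y then k x y else 0) = -if nbr y x then k y x else 0 := by
    by_cases hxy : nbr x y
    · rw [if_pos hxy, if_pos (hsymm x y hxy), hanti]
    · rw [if_neg hxy, if_neg fun hyx => hxy (hsymm y x hyx), neg_zero]
  rw [mul_sum, ← sub_eq_zero, ← sum_sub_distrib]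
  simp only [exp_mul_irreversibleRate_sub hsymm hanti, ← mul_sum, hanti', sum_neg_distrib, hrow,
    neg_zero, mul_zero]

theorem exp_mul_irreversibleRate_ne (hsymm : ∀ x y, nbr x y → nbr y x)
    (hanti : ∀ x y, k x y = -k y x) {x y : S} (hxy : nbr x y) (hk : k x y ≠ 0) :
    Real.exp (-V x) * irreversibleRate nbr V k x y ≠
      Real.exp (-V y) * irreversibleRate nbr V k y x := by
  intro h
  have := exp_mul_irreversibleRate_sub (V := V) hsymm hanti 0 x y
  simp only [sub_zero, h, sub_self, neg_zero, Real.exp_zero, mul_one, if_pos hxy] at this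
  exact hk (by linarith)

end IrreversibleRate

end ZeroRange

open ZeroRange

theorem zrp_irreversible_invariant_but_not_reversible_general
    {S : Type*} [Fintype S] [DecidableEq S]
    (nbr : S → S → Prop) [DecidableRel nbr] (hnbr_symm : ∀ x y, nbr x y → nbr y x)
    (V : S → ℝ) (lam : ℝ) (g : ℕ → ℝ)
    (hgpos : ∀ k, 0 < k → 0 < g k)
    (k : S → S → ℝ)
    (hk_antisymm : ∀ x y, k x y = -k y x)
    (hk_rowsum : ∀ x, ∑ y, (if nbr x y then k x y else 0) = 0)
    (c : S → S → ℝ)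
    (hc : ∀ x y, c x y =
      if nbr x y then Real.exp ((V x - V y) / 2) + k x y * Real.exp (V x) else 0)
    (φ : S → ℝ) (hφ : ∀ x, φ x = Real.exp (-V x - lam))
    (gfact : ℕ → ℝ) (hgfact0 : gfact 0 = 1)
    (hgfact : ∀ m, gfact (m + 1) = gfact m * g (m + 1))
    (z : S → ℝ) (hzsum : ∀ x, HasSum (fun m : ℕ => φ x ^ m / gfact m) (z x))
    (π : (S → ℕ) → ℝ)
    (hπ : ∀ η, π η = ∏ x, φ x ^ η x / (z x * gfact (η x)))
    (move : (S → ℕ) → S → S → (S → ℕ))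
    (hmove : ∀ η x y, move η x y =
      if η x = 0 then η
      else fun w => η w - (if w = x then 1 else 0) + (if w = y then 1 else 0)) :
    (∀ f : (S → ℕ) → ℝ, (∃ M, ∀ η, |f η| ≤ M) →
      ∑' η : S → ℕ,
        π η * (∑ x, ∑ y, (f (move η x y) - f η) * g (η x) * c x y) = 0) ∧
    ((∃ x y, nbr x y ∧ k x y ≠ 0) →
      ¬ (∀ x y, Real.exp (-V x) * c x y = Real.exp (-V y) * c y x)) := by
  obtain rfl : c = irreversibleRate nbr V k := funext₂ hc
  obtain rfl : move = jump := funext₃ hmove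
  obtain rfl : π = fun η => ∏ x, φ x ^ η x / (z x * gfact (η x)) := funext hπ
  refine ⟨fun f hf => ?_, fun ⟨x, y, hxy, hk⟩ hdb =>
    exp_mul_irreversibleRate_ne hnbr_symm hk_antisymm hxy hk (hdb x y)⟩
  have hgfact_pos := gfactorial_pos hgpos hgfact0 hgfact
  have hφ_pos (x : S) : 0 < φ x := hφ x ▸ Real.exp_pos _
  have hz (x : S) : 0 ≤ z x :=
    (hzsum x).nonneg fun m => div_nonneg (pow_nonneg (hφ_pos x).le m) (hgfact_pos m).le
  have hflux (y : S) : ∑ x, φ x * irreversibleRate nbr V k x y =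
      φ y * ∑ x, irreversibleRate nbr V k y x := by
    simpa only [← hφ] using
      sum_exp_mul_irreversibleRate (V := V) hnbr_symm hk_antisymm hk_rowsum lam y
  refine tsum_mul_generator_eq_zero (p := fun x m => φ x ^ m / (z x * gfact m))
    (fun x m => ?_) (fun x => ?_)
    (fun x m => pow_succ_div_mul (hgfact m) (hgpos _ m.succ_pos).ne' _ _) _ hflux f hf
  · exact div_nonneg (pow_nonneg (hφ_pos x).le m) (mul_nonneg (hz x) (hgfact_pos m).le)
  · simpa only [div_div, mul_comm] using (hzsum x).summable.div_const (z x)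

/-- For the irreversible zero-range process with rates
`c(x→y) = e^{(V(x)−V(y))/2} + k_{x,y} e^{V(x)}` for nearest neighbours, where
`k_{x,y} = −k_{y,x}`, `∑_{y~x} k_{x,y} = 0`, and `|k_{x,y}| < e^{−(V(x)+V(y))/2}`,
the grand-canonical product measure `π` with fugacity `φ(x) = e^{−V(x)−λ}` remains
invariant, although detailed balance (with respect to the single-site weights `e^{−V}`)
fails whenever some `k_{x,y} ≠ 0`. -/
theorem zrp_irreversible_invariant_but_not_reversible
    {S : Type*} [Fintype S] [DecidableEq S] [Nonempty S]
    (nbr : S → S → Prop) [DecidableRel nbr] (hnbr_symm : ∀ x y, nbr x y → nbr y x)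
    (V : S → ℝ) (lam : ℝ) (g : ℕ → ℝ)
    (hg0 : g 0 = 0) (hgpos : ∀ k, 0 < k → 0 < g k)
    (k : S → S → ℝ)
    (hk_antisymm : ∀ x y, k x y = -k y x)
    (hk_rowsum : ∀ x, ∑ y, (if nbr x y then k x y else 0) = 0)
    (hk_bound : ∀ x y, nbr x y → |k x y| < Real.exp (-(V x + V y) / 2))
    (c : S → S → ℝ)
    (hc : ∀ x y, c x y =
      if nbr x y then Real.exp ((V x - V y) / 2) + k x y * Real.exp (V x) else 0)
    (φ : S → ℝ) (hφ : ∀ x, φ x = Real.exp (-V x - lam))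
    (gfact : ℕ → ℝ) (hgfact0 : gfact 0 = 1)
    (hgfact : ∀ m, gfact (m + 1) = gfact m * g (m + 1))
    (z : S → ℝ) (hzsum : ∀ x, HasSum (fun m : ℕ => φ x ^ m / gfact m) (z x))
    (π : (S → ℕ) → ℝ)
    (hπ : ∀ η, π η = ∏ x, φ x ^ η x / (z x * gfact (η x)))
    (move : (S → ℕ) → S → S → (S → ℕ))
    (hmove : ∀ η x y, move η x y =
      if η x = 0 then η
      else fun w => η w - (if w = x then 1 else 0) + (if w = y then 1 else 0)) :
    (∀ f : (S → ℕ) → ℝ, (∃ M, ∀ η, |f η| ≤ M) →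
      ∑' η : S → ℕ,
        π η * (∑ x, ∑ y, (f (move η x y) - f η) * g (η x) * c x y) = 0) ∧
    ((∃ x y, nbr x y ∧ k x y ≠ 0) →
      ¬ (∀ x y, Real.exp (-V x) * c x y = Real.exp (-V y) * c y x)) :=
  zrp_irreversible_invariant_but_not_reversible_general nbr hnbr_symm V lam g hgpos k hk_antisymm
    hk_rowsum c hc φ hφ gfact hgfact0 hgfact z hzsum π hπ move hmove
end
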